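/- arXiv:1102.4869 — 3 statements merged into one kernel-verified Lean document; each statement's English description precedes it below -/
import Mathlib

section
/- Let A be the Fell C*-algebra of a continuous Hilbert bundle over a locally compact Hausdorff space T. For essential ideals I ⊆ J of A, define π_{JI}: A^J → A^I by π_{JI}(a)(t) = Ψ_{JIt} a(Φ_{JI}(t)) Ψ_{JIt}^{-1} for t ∈ βX^I. Then π_{JI}(a) ∈ A^I for every a ∈ A^J, π_{JI} is an isometric *-monomorphism, ({A^I}, {π_{JI}}) is a direct system of C*-algebras and monomorphisms (π_{II} = id and π_{KI} = π_{JI} ∘ π_{KJ} for I ⊆ J ⊆ K), and δ_I = π_{JI} ∘ (δ_J restricted to I) for all essential ideals I ⊆ J. -/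
/- Common definitions: continuous Hilbert bundles and Fell (spatial continuous
trace) C*-algebras, following Fell (1961). -/

noncomputable section

/-- A vector field `ξ` is a local uniform limit of members of `S`. -/
def LocUnifApprox {T : Type*} [TopologicalSpace T] {H : T → Type*}
    [∀ t, NormedAddCommGroup (H t)] (S : Set (∀ t, H t)) (ξ : ∀ t, H t) : Prop :=
  ∀ (t₀ : T) (ε : ℝ), 0 < ε → ∃ U : Set T, IsOpen U ∧ t₀ ∈ U ∧
    ∃ ω ∈ S, ∀ t ∈ U, ‖ω t - ξ t‖ < ε

/-- Axioms (I)-(IV) of a continuous Hilbert bundle `(T, {H t}, Ω)`. -/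
structure IsCtsHilbertBundle {T : Type*} [TopologicalSpace T] {H : T → Type*}
    [∀ t, NormedAddCommGroup (H t)] [∀ t, InnerProductSpace ℂ (H t)]
    (Ω : Set (∀ t, H t)) : Prop where
  /-- axiom (I): `Ω` is a `C(T)`-module (additive part) -/
  zero_mem : (fun t => (0 : H t)) ∈ Ω
  add_mem : ∀ ω ∈ Ω, ∀ ν ∈ Ω, (fun t => ω t + ν t) ∈ Ω
  /-- axiom (I): `C(T)`-action -/
  smul_mem : ∀ (f : C(T, ℂ)), ∀ ω ∈ Ω, (fun t => f t • ω t) ∈ Ω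
  /-- axiom (II) -/
  full : ∀ (t : T) (v : H t), ∃ ω ∈ Ω, ω t = v
  /-- axiom (III) -/
  norm_continuous : ∀ ω ∈ Ω, Continuous fun t => ‖ω t‖
  /-- axiom (IV) -/
  closed_locUnif : ∀ ξ : ∀ t, H t, LocUnifApprox Ω ξ → ξ ∈ Ω

variable {T : Type*} [TopologicalSpace T] {H : T → Type*}
  [∀ t, NormedAddCommGroup (H t)] [∀ t, InnerProductSpace ℂ (H t)]
  [∀ t, CompleteSpace (H t)]

/-- An operator field is weakly continuous w.r.t. the bundle `Ω`. -/
def WeaklyCts (Ω : Set (∀ t, H t)) (a : ∀ t, H t →L[ℂ] H t) : Prop :=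
  ∀ ω₁ ∈ Ω, ∀ ω₂ ∈ Ω, Continuous fun t => (inner ℂ (a t (ω₁ t)) (ω₂ t) : ℂ)

/-- An operator field is almost finite-dimensional w.r.t. the bundle `Ω`. -/
def AlmostFinDim (Ω : Set (∀ t, H t)) (a : ∀ t, H t →L[ℂ] H t) : Prop :=
  ∀ (t₀ : T) (ε : ℝ), 0 < ε → ∃ U : Set T, IsOpen U ∧ t₀ ∈ U ∧
    ∃ (n : ℕ) (ω : Fin n → ∀ t, H t), (∀ i, ω i ∈ Ω) ∧ ∀ t ∈ U,
      LinearIndependent ℂ (fun i => ω i t) ∧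
      ∃ p : H t →L[ℂ] H t, IsIdempotentElem p ∧ IsSelfAdjoint p ∧
        LinearMap.range (p : H t →ₗ[ℂ] H t) = Submodule.span ℂ (Set.range fun i => ω i t) ∧
        ‖p * a t * p - a t‖ < ε

/-- The Fell (spatial continuous-trace) C*-algebra `A(T, {H t}, Ω)`: all weakly
continuous, almost finite-dimensional operator fields whose pointwise norm
function lies in `C₀(T)`; a set of operator fields with pointwise operations. -/
def FellAlgebra (Ω : Set (∀ t, H t)) : Set (∀ t, H t →L[ℂ] H t) :=
  {a | WeaklyCts Ω a ∧ AlmostFinDim Ω a ∧ (Continuous fun t => ‖a t‖) ∧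
    Filter.Tendsto (fun t => ‖a t‖) (Filter.cocompact T) (nhds 0)}

/-- `I` is a (closed, two-sided, star) ideal of the C*-algebra of operator
fields `A` (with pointwise operations and supremum norm). -/
structure IsIdealOf (A I : Set (∀ t, H t →L[ℂ] H t)) : Prop where
  subset : I ⊆ A
  zero_mem : (0 : ∀ t, H t →L[ℂ] H t) ∈ I
  add_mem : ∀ a ∈ I, ∀ b ∈ I, a + b ∈ I
  smul_mem : ∀ (c : ℂ), ∀ a ∈ I, c • a ∈ I
  star_mem : ∀ a ∈ I, star a ∈ I
  mul_mem_left : ∀ a ∈ A, ∀ b ∈ I, a * b ∈ I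
  mul_mem_right : ∀ a ∈ I, ∀ b ∈ A, a * b ∈ I
  norm_closed : ∀ a ∈ A, (∀ ε : ℝ, 0 < ε → ∃ b ∈ I, ∀ t, ‖a t - b t‖ < ε) → a ∈ I

/-- `I` is an essential ideal of `A`: it has nonzero intersection with every
nonzero ideal of `A`. -/
def IsEssentialIdealOf (A I : Set (∀ t, H t →L[ℂ] H t)) : Prop :=
  IsIdealOf A I ∧
    ∀ J, IsIdealOf A J → (∃ b ∈ J, b ≠ 0) → ∃ c, c ∈ I ∧ c ∈ J ∧ c ≠ 0

/-- The open set `X^I ⊆ T` associated with an ideal `I`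
(the complement of `Z^I = {t | b t = 0 ∀ b ∈ I}`). -/
def idealSupp (I : Set (∀ t, H t →L[ℂ] H t)) : Set T :=
  {t | ∃ b ∈ I, b t ≠ 0}

/-- `Ω_b`: the bounded vector fields of the bundle. -/
def boundedFields (Ω : Set (∀ t, H t)) : Set (∀ t, H t) :=
  {ω | ω ∈ Ω ∧ ∃ M : ℝ, ∀ t, ‖ω t‖ ≤ M}

/-- The rank-one operator field `Θ_{ω,ν} : ξ ↦ ⟨ξ, ν⟩·ω` (inner product linear
in `ξ`, conjugate-linear in `ν`). -/
def rankOneField (ω ν : ∀ t, H t) : ∀ t, H t →L[ℂ] H t :=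
  fun t => (innerSL ℂ (ν t)).smulRight (ω t)

/-- `F(S)`: finite sums of rank-one fields `Θ_{ω,ν}` with `ω, ν ∈ S`. -/
def finRankFields (S : Set (∀ t, H t)) : Set (∀ t, H t →L[ℂ] H t) :=
  {a | ∃ (n : ℕ) (ω ν : Fin n → ∀ t, H t), (∀ i, ω i ∈ S) ∧ (∀ i, ν i ∈ S) ∧
    a = fun t => ∑ i, rankOneField (ω i) (ν i) t}

/-- An operator field `x` is strictly continuous with respect to a family `F`
of operator fields. -/
def StrictlyCts (F : Set (∀ t, H t →L[ℂ] H t)) (x : ∀ t, H t →L[ℂ] H t) : Prop :=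
  ∀ (t₀ : T), ∀ a ∈ F, ∀ ε : ℝ, 0 < ε → ∃ U : Set T, IsOpen U ∧ t₀ ∈ U ∧
    ∃ b ∈ F, ∀ t ∈ U, ‖(x t - b t) * a t‖ + ‖a t * (x t - b t)‖ < ε

/-- The concrete realisation (Akemann–Pedersen–Tomiyama) of the multiplier
algebra: bounded operator fields, strictly continuous w.r.t. `F`. -/
def MultSet (F : Set (∀ t, H t →L[ℂ] H t)) : Set (∀ t, H t →L[ℂ] H t) :=
  {x | (∃ C : ℝ, ∀ t, ‖x t‖ ≤ C) ∧ StrictlyCts F x}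

/-- Conjugation of an operator by a unitary (linear isometric equivalence). -/
def conjCLM {E F : Type*} [NormedAddCommGroup E] [NormedAddCommGroup F]
    [NormedSpace ℂ E] [NormedSpace ℂ F] (e : E ≃ₗᵢ[ℂ] F) (x : E →L[ℂ] E) :
    F →L[ℂ] F :=
  ((e.toContinuousLinearEquiv : E →L[ℂ] F).comp x).comp
    (e.symm.toContinuousLinearEquiv : F →L[ℂ] E)

end

/-!
`π_{JI}` is fibrewise conjugation by unitaries precomposed with the surjection `Φ_{JI}`, so it is
an injective isometric *-homomorphism. The unitaries are determined by their values on the dense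
sets `{ω̄(t) : ω ∈ Ω_b}`, which gives `π_{II} = id`, `π_{KI} = π_{JI} ∘ π_{KJ}` and
`δ_I = π_{JI} ∘ δ_J` on `X^I`; off `X^I` the latter holds because both sides have continuous norm.

The analytic point is that `π_{JI}(a)` is weakly continuous. The fields `ω̄^I` need not be bounded
on `βX^I`, only on the dense subset `X^I`; but the matrix coefficients
`t ↦ ⟨π_{JI}(a)(t) ω̄^I(t), ν̄^I(t)⟩` are continuous, so estimates between them proved on `X^I`
persist on open sets, and this makes the coefficients of arbitrary fields of `Ω^I` local
uniform limits of continuous functions.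
-/

open Filter Topology Set

section Conjugation

variable {E F G : Type*} [NormedAddCommGroup E] [NormedSpace ℂ E] [NormedAddCommGroup F]
  [NormedSpace ℂ F] [NormedAddCommGroup G] [NormedSpace ℂ G]

theorem conjCLM_trans (e : E ≃ₗᵢ[ℂ] F) (f : F ≃ₗᵢ[ℂ] G) (x : E →L[ℂ] E) :
    conjCLM (e.trans f) x = conjCLM f (conjCLM e x) :=
  rfl

theorem norm_conjCLM (e : E ≃ₗᵢ[ℂ] F) (x : E →L[ℂ] E) : ‖conjCLM e x‖ = ‖x‖ := by
  rw [conjCLM, ContinuousLinearMap.opNorm_comp_linearIsometryEquiv]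
  exact e.toLinearIsometry.norm_toContinuousLinearMap_comp

theorem range_conjCLM (e : E ≃ₗᵢ[ℂ] F) (p : E →L[ℂ] E) :
    LinearMap.range (conjCLM e p : F →ₗ[ℂ] F) =
      (LinearMap.range (p : E →ₗ[ℂ] E)).map (e.toLinearEquiv : E →ₗ[ℂ] F) := by
  have hcomp : (conjCLM e p : F →ₗ[ℂ] F) =
      (e.toLinearEquiv : E →ₗ[ℂ] F) ∘ₗ (p : E →ₗ[ℂ] E) ∘ₗ (e.symm.toLinearEquiv : F →ₗ[ℂ] E) :=
    rfl
  rw [hcomp, LinearMap.range_comp, LinearMap.range_comp_of_range_eq_top _ (LinearEquiv.range _)]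

theorem conjCLM_congr_of_dense {Y : Type*} {H : Y → Type*} [∀ r, NormedAddCommGroup (H r)]
    [∀ r, NormedSpace ℂ (H r)] {α : Type*} {f : α → ∀ r, H r} {A : Set α} {q q' : Y}
    (hq : q = q') (hA : Dense ((fun ω => f ω q') '' A)) (e : H q ≃ₗᵢ[ℂ] G)
    (e' : H q' ≃ₗᵢ[ℂ] G) (he : ∀ ω ∈ A, e (f ω q) = e' (f ω q')) (a : ∀ r, H r →L[ℂ] H r) :
    conjCLM e (a q) = conjCLM e' (a q') := by
  subst hq
  have hee' : e = e' := DFunLike.coe_injective <|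
    Continuous.ext_on hA e.continuous e'.continuous (by rintro _ ⟨ω, hω, rfl⟩; exact he ω hω)
  rw [hee']

end Conjugation

section InnerConjugation

variable {E F : Type*} [NormedAddCommGroup E] [InnerProductSpace ℂ E] [NormedAddCommGroup F]
  [InnerProductSpace ℂ F]

theorem conjCLM_eq_conjStarAlgEquiv [CompleteSpace E] [CompleteSpace F] (e : E ≃ₗᵢ[ℂ] F)
    (x : E →L[ℂ] E) : conjCLM e x = e.conjStarAlgEquiv x :=
  rfl

theorem inner_conjCLM_apply (e : E ≃ₗᵢ[ℂ] F) (x : E →L[ℂ] E) (v w : E) :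
    inner ℂ (conjCLM e x (e v)) (e w) = inner ℂ (x v) w := by
  simp [conjCLM]

end InnerConjugation

theorem dense_image_of_forall_norm_sub_lt {α V : Type*} [SeminormedAddCommGroup V] {f : α → V}
    {A : Set α} (h : ∀ (v : V) (ε : ℝ), 0 < ε → ∃ a ∈ A, ‖f a - v‖ < ε) : Dense (f '' A) :=
  Metric.dense_iff.2 fun v ε hε =>
    let ⟨a, ha, hlt⟩ := h v ε hε
    ⟨f a, by rwa [Metric.mem_ball, dist_eq_norm], a, ha, rfl⟩

theorem le_of_eventually_le_add_mul {a b c : ℝ} (h : ∀ᶠ η in 𝓝[>] (0 : ℝ), a ≤ b + η * c) :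
    a ≤ b := by
  have hlim : Tendsto (fun η : ℝ => b + η * c) (𝓝[>] 0) (𝓝 b) := by
    simpa using (tendsto_const_nhds.add (tendsto_id.mul_const c)).mono_left
      (nhdsWithin_le_nhds (a := (0 : ℝ)))
  exact ge_of_tendsto hlim h

theorem continuousAt_of_eventually_approx {X : Type*} [TopologicalSpace X] {f : X → ℂ}
    {t₀ : X} (K : ℝ) (h : ∀ᶠ δ in 𝓝[>] (0 : ℝ),
      ∃ g : X → ℂ, ContinuousAt g t₀ ∧ ∀ᶠ t in 𝓝 t₀, ‖f t - g t‖ ≤ K * δ) :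
    ContinuousAt f t₀ := by
  refine continuousAt_of_locally_uniform_approx_of_continuousAt fun u hu => ?_
  obtain ⟨ε, hε, hεu⟩ := Metric.mem_uniformity_dist.1 hu
  have hsmall : ∀ᶠ δ in 𝓝[>] (0 : ℝ), K * δ < ε := by
    have hlim : Tendsto (fun δ : ℝ => K * δ) (𝓝[>] 0) (𝓝 0) := by
      simpa using (tendsto_id.const_mul K).mono_left (nhdsWithin_le_nhds (a := (0 : ℝ)))
    exact hlim (Iio_mem_nhds hε)
  obtain ⟨δ, ⟨g, hg, hfg⟩, hδ⟩ := (h.and hsmall).exists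
  refine ⟨_, hfg, g, hg, fun t ht => hεu ?_⟩
  rw [dist_eq_norm]
  exact ht.trans_lt hδ

theorem Dense.norm_le_of_forall_inter {X V : Type*} [TopologicalSpace X]
    [SeminormedAddCommGroup V] {D U : Set X} (hD : Dense D) (hU : IsOpen U) {g : X → V}
    (hg : Continuous g) {B : ℝ} (h : ∀ d ∈ D ∩ U, ‖g d‖ ≤ B) : ∀ t ∈ U, ‖g t‖ ≤ B :=
  fun _t ht => closure_minimal (fun d hd => h d ⟨hd.2, hd.1⟩)
    (isClosed_le hg.norm continuous_const) (hD.open_subset_closure_inter hU ht)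

section FieldCoeff

variable {X : Type*} {E : X → Type*} [∀ t, NormedAddCommGroup (E t)]

theorem locUnifApprox_of_mem [TopologicalSpace X] {S : Set (∀ t, E t)} {s : ∀ t, E t}
    (hs : s ∈ S) : LocUnifApprox S s :=
  fun _t₀ _ε hε => ⟨univ, isOpen_univ, mem_univ _, s, hs, fun t _ => by simpa using hε⟩

theorem LocUnifApprox.exists_bound_on [TopologicalSpace X] {S : Set (∀ t, E t)} {D : Set X}
    (hSD : ∀ s ∈ S, ∃ M, ∀ d ∈ D, ‖s d‖ ≤ M) {ω : ∀ t, E t} (hω : LocUnifApprox S ω)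
    (t₀ : X) : ∃ U, IsOpen U ∧ t₀ ∈ U ∧ ∃ M, ∀ d ∈ D ∩ U, ‖ω d‖ ≤ M := by
  obtain ⟨U, hU, ht₀, s, hs, hsω⟩ := hω t₀ 1 one_pos
  obtain ⟨M, hM⟩ := hSD s hs
  refine ⟨U, hU, ht₀, M + 1, fun d hd => ?_⟩
  calc ‖ω d‖ ≤ ‖s d‖ + ‖s d - ω d‖ := norm_le_insert _ _
    _ ≤ M + 1 := add_le_add (hM d hd.1) (hsω d hd.2).le

variable [∀ t, InnerProductSpace ℂ (E t)]

noncomputable def fieldCoeff (b : ∀ t, E t →L[ℂ] E t) (x y : ∀ t, E t) (t : X) : ℂ :=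
  inner ℂ (b t (x t)) (y t)

theorem norm_fieldCoeff_sub_le {b : ∀ t, E t →L[ℂ] E t} {C : ℝ} (hb : ∀ t, ‖b t‖ ≤ C)
    (x y x' y' : ∀ t, E t) (t : X) :
    ‖fieldCoeff b x y t - fieldCoeff b x' y' t‖ ≤
      C * (‖x t - x' t‖ * ‖y t‖ + ‖x' t‖ * ‖y t - y' t‖) := by
  have hsplit : fieldCoeff b x y t - fieldCoeff b x' y' t =
      inner ℂ (b t (x t - x' t)) (y t) + inner ℂ (b t (x' t)) (y t - y' t) := by
    simp only [fieldCoeff, map_sub, inner_sub_left, inner_sub_right]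
    ring
  have hop : ∀ v w : E t, ‖(inner ℂ (b t v) w : ℂ)‖ ≤ C * (‖v‖ * ‖w‖) := fun v w =>
    calc ‖(inner ℂ (b t v) w : ℂ)‖ ≤ ‖b t v‖ * ‖w‖ := norm_inner_le_norm _ _
      _ ≤ ‖b t‖ * ‖v‖ * ‖w‖ := by gcongr; exact (b t).le_opNorm v
      _ ≤ C * (‖v‖ * ‖w‖) := by rw [mul_assoc]; gcongr; exact hb t
  rw [hsplit, mul_add]
  exact (norm_add_le _ _).trans (add_le_add (hop _ _) (hop _ _))

variable [TopologicalSpace X]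

theorem norm_fieldCoeff_sub_le_of_dense {b : ∀ t, E t →L[ℂ] E t} {C : ℝ}
    (hb : ∀ t, ‖b t‖ ≤ C) {D U : Set X} (hD : Dense D) (hU : IsOpen U) {x y x' y' : ∀ t, E t}
    (hxy : Continuous (fieldCoeff b x y)) (hxy' : Continuous (fieldCoeff b x' y'))
    {δ M : ℝ} (hx : ∀ d ∈ D ∩ U, ‖x d - x' d‖ ≤ δ) (hy : ∀ d ∈ D ∩ U, ‖y d - y' d‖ ≤ δ)
    (hyM : ∀ d ∈ D ∩ U, ‖y d‖ ≤ M) (hx'M : ∀ d ∈ D ∩ U, ‖x' d‖ ≤ M) :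
    ∀ t ∈ U, ‖fieldCoeff b x y t - fieldCoeff b x' y' t‖ ≤ C * (δ * M + M * δ) := by
  refine hD.norm_le_of_forall_inter hU (hxy.sub hxy') fun d hd => ?_
  have hC : 0 ≤ C := (norm_nonneg _).trans (hb d)
  have hδ : 0 ≤ δ := (norm_nonneg _).trans (hx d hd)
  have hM : 0 ≤ M := (norm_nonneg _).trans (hx'M d hd)
  exact (norm_fieldCoeff_sub_le hb x y x' y' d).trans <| mul_le_mul_of_nonneg_left (add_le_add
    (mul_le_mul (hx d hd) (hyM d hd) (norm_nonneg _) hδ)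
    (mul_le_mul (hx'M d hd) (hy d hd) (norm_nonneg _) hM)) hC

theorem norm_fieldCoeff_sub_le_of_locUnifApprox {S : Set (∀ t, E t)} {D : Set X}
    (hD : Dense D) {b : ∀ t, E t →L[ℂ] E t} {C : ℝ} (hb : ∀ t, ‖b t‖ ≤ C)
    (hbS : ∀ s₁ ∈ S, ∀ s₂ ∈ S, Continuous (fieldCoeff b s₁ s₂)) {ω₁ ω₂ : ∀ t, E t}
    (hω₁ : LocUnifApprox S ω₁) (hω₂ : LocUnifApprox S ω₂) {U : Set X} (hU : IsOpen U)
    {M δ : ℝ} (hδ1 : δ ≤ 1) (hM₁ : ∀ d ∈ D ∩ U, ‖ω₁ d‖ ≤ M) (hM₂ : ∀ d ∈ D ∩ U, ‖ω₂ d‖ ≤ M)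
    {s₁ s₂ : ∀ t, E t} (hs₁ : s₁ ∈ S) (hs₂ : s₂ ∈ S) (hs₁ω : ∀ t ∈ U, ‖s₁ t - ω₁ t‖ < δ)
    (hs₂ω : ∀ t ∈ U, ‖s₂ t - ω₂ t‖ < δ) :
    ∀ t ∈ U, ‖fieldCoeff b ω₁ ω₂ t - fieldCoeff b s₁ s₂ t‖ ≤ C * ((M + 1) * 2) * δ := by
  intro t ht
  -- `ω₁, ω₂` are controlled only on `D`: compare at `t` with sharper approximants, whose
  -- coefficients obey the estimate from `D`, and let their accuracy `η` tend to `0`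
  refine le_of_eventually_le_add_mul (c := C * (‖ω₁ t‖ + ‖ω₂ t‖ + 1 + (M + 1) * 2)) ?_
  filter_upwards [Ioo_mem_nhdsGT one_pos] with η ⟨hη, hη1⟩
  obtain ⟨W₁, hW₁, htW₁, s₁', hs₁', hs₁'ω⟩ := hω₁ t η hη
  obtain ⟨W₂, hW₂, htW₂, s₂', hs₂', hs₂'ω⟩ := hω₂ t η hη
  have hC : 0 ≤ C := (norm_nonneg _).trans (hb t)
  have hfar : ‖fieldCoeff b s₁' s₂' t - fieldCoeff b s₁ s₂ t‖ ≤
      C * ((η + δ) * (M + 1) + (M + 1) * (η + δ)) := by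
    refine norm_fieldCoeff_sub_le_of_dense hb hD (hU.inter (hW₁.inter hW₂))
      (hbS s₁' hs₁' s₂' hs₂') (hbS s₁ hs₁ s₂ hs₂) ?_ ?_ ?_ ?_ t ⟨ht, htW₁, htW₂⟩ <;>
      rintro d ⟨hdD, hdU, hdW₁, hdW₂⟩
    · linarith [norm_sub_le_norm_sub_add_norm_sub (s₁' d) (ω₁ d) (s₁ d),
        norm_sub_rev (ω₁ d) (s₁ d), hs₁'ω d hdW₁, hs₁ω d hdU]
    · linarith [norm_sub_le_norm_sub_add_norm_sub (s₂' d) (ω₂ d) (s₂ d),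
        norm_sub_rev (ω₂ d) (s₂ d), hs₂'ω d hdW₂, hs₂ω d hdU]
    · linarith [norm_le_insert' (s₂' d) (ω₂ d), hs₂'ω d hdW₂, hM₂ d ⟨hdD, hdU⟩]
    · linarith [norm_le_insert' (s₁ d) (ω₁ d), hs₁ω d hdU, hM₁ d ⟨hdD, hdU⟩]
  have hnear : ‖fieldCoeff b ω₁ ω₂ t - fieldCoeff b s₁' s₂' t‖ ≤
      C * (η * ‖ω₂ t‖ + (‖ω₁ t‖ + η) * η) := by
    have h₁ : ‖ω₁ t - s₁' t‖ ≤ η := by rw [norm_sub_rev]; exact (hs₁'ω t htW₁).le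
    have h₂ : ‖ω₂ t - s₂' t‖ ≤ η := by rw [norm_sub_rev]; exact (hs₂'ω t htW₂).le
    have h₁' : ‖s₁' t‖ ≤ ‖ω₁ t‖ + η := by
      linarith [norm_le_insert' (s₁' t) (ω₁ t), hs₁'ω t htW₁]
    refine (norm_fieldCoeff_sub_le hb ω₁ ω₂ s₁' s₂' t).trans (mul_le_mul_of_nonneg_left ?_ hC)
    gcongr
  calc ‖fieldCoeff b ω₁ ω₂ t - fieldCoeff b s₁ s₂ t‖
      ≤ ‖fieldCoeff b ω₁ ω₂ t - fieldCoeff b s₁' s₂' t‖ +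
          ‖fieldCoeff b s₁' s₂' t - fieldCoeff b s₁ s₂ t‖ :=
        norm_sub_le_norm_sub_add_norm_sub _ _ _
    _ ≤ C * (η * ‖ω₂ t‖ + (‖ω₁ t‖ + η) * η) + C * ((η + δ) * (M + 1) + (M + 1) * (η + δ)) :=
        add_le_add hnear hfar
    _ ≤ C * ((M + 1) * 2) * δ + η * (C * (‖ω₁ t‖ + ‖ω₂ t‖ + 1 + (M + 1) * 2)) := by
        nlinarith [mul_le_mul_of_nonneg_left hη1.le (mul_nonneg hC hη.le)]

theorem weaklyCts_of_dense [∀ t, CompleteSpace (E t)] {S : Set (∀ t, E t)} {D : Set X}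
    (hD : Dense D) (hSD : ∀ s ∈ S, ∃ M, ∀ d ∈ D, ‖s d‖ ≤ M) {b : ∀ t, E t →L[ℂ] E t}
    {C : ℝ} (hb : ∀ t, ‖b t‖ ≤ C)
    (hbS : ∀ s₁ ∈ S, ∀ s₂ ∈ S, Continuous (fieldCoeff b s₁ s₂)) :
    WeaklyCts {ω | LocUnifApprox S ω} b := by
  intro ω₁ hω₁ ω₂ hω₂
  refine continuous_iff_continuousAt.2 fun t₀ => ?_
  obtain ⟨U₁, hU₁, ht₀U₁, M₁, hM₁⟩ := hω₁.exists_bound_on hSD t₀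
  obtain ⟨U₂, hU₂, ht₀U₂, M₂, hM₂⟩ := hω₂.exists_bound_on hSD t₀
  refine continuousAt_of_eventually_approx (C * ((max M₁ M₂ + 1) * 2)) ?_
  filter_upwards [Ioo_mem_nhdsGT one_pos] with δ ⟨hδ, hδ1⟩
  obtain ⟨V₁, hV₁, ht₀V₁, s₁, hs₁, hs₁ω⟩ := hω₁ t₀ δ hδ
  obtain ⟨V₂, hV₂, ht₀V₂, s₂, hs₂, hs₂ω⟩ := hω₂ t₀ δ hδ
  have hU : IsOpen (U₁ ∩ U₂ ∩ (V₁ ∩ V₂)) := (hU₁.inter hU₂).inter (hV₁.inter hV₂)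
  refine ⟨fieldCoeff b s₁ s₂, (hbS s₁ hs₁ s₂ hs₂).continuousAt,
    eventually_of_mem (hU.mem_nhds ⟨⟨ht₀U₁, ht₀U₂⟩, ht₀V₁, ht₀V₂⟩) ?_⟩
  exact norm_fieldCoeff_sub_le_of_locUnifApprox hD hb hbS hω₁ hω₂ hU hδ1.le
    (fun d hd => (hM₁ d ⟨hd.1, hd.2.1.1⟩).trans (le_max_left _ _))
    (fun d hd => (hM₂ d ⟨hd.1, hd.2.1.2⟩).trans (le_max_right _ _)) hs₁ hs₂
    (fun t ht => hs₁ω t ht.2.1) (fun t ht => hs₂ω t ht.2.2)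

end FieldCoeff

section Transport

variable {X Y : Type*} {E : X → Type*} {F : Y → Type*}
  [∀ t, NormedAddCommGroup (E t)] [∀ t, InnerProductSpace ℂ (E t)]
  [∀ r, NormedAddCommGroup (F r)] [∀ r, InnerProductSpace ℂ (F r)]
  (Φ : X → Y) (Ψ : ∀ t, F (Φ t) ≃ₗᵢ[ℂ] E t)

def transportField (σ : ∀ r, F r) : ∀ t, E t := fun t => Ψ t (σ (Φ t))

variable {Φ Ψ} in
theorem LocUnifApprox.transport [TopologicalSpace X] [TopologicalSpace Y] (hΦ : Continuous Φ)
    {S' : Set (∀ r, F r)} {S : Set (∀ t, E t)} (hS : ∀ s ∈ S', transportField Φ Ψ s ∈ S)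
    {σ : ∀ r, F r} (hσ : LocUnifApprox S' σ) : LocUnifApprox S (transportField Φ Ψ σ) := by
  intro t₀ ε hε
  obtain ⟨V, hV, hV₀, s, hs, hsσ⟩ := hσ (Φ t₀) ε hε
  refine ⟨Φ ⁻¹' V, hV.preimage hΦ, hV₀, transportField Φ Ψ s, hS s hs, fun t ht => ?_⟩
  rw [transportField, transportField, ← map_sub, LinearIsometryEquiv.norm_map]
  exact hsσ (Φ t) ht

noncomputable def conjFieldHom [∀ t, CompleteSpace (E t)] [∀ r, CompleteSpace (F r)] :
    (∀ r, F r →L[ℂ] F r) →⋆ₐ[ℂ] (∀ t, E t →L[ℂ] E t) where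
  toFun a t := conjCLM (Ψ t) (a (Φ t))
  map_one' := funext fun t => map_one (Ψ t).conjStarAlgEquiv
  map_mul' _ _ := funext fun t => map_mul (Ψ t).conjStarAlgEquiv _ _
  map_zero' := funext fun t => map_zero (Ψ t).conjStarAlgEquiv
  map_add' _ _ := funext fun t => map_add (Ψ t).conjStarAlgEquiv _ _
  commutes' c := funext fun t => AlgHomClass.commutes (Ψ t).conjStarAlgEquiv c
  map_star' _ := funext fun t => map_star (Ψ t).conjStarAlgEquiv _

variable [∀ t, CompleteSpace (E t)] [∀ r, CompleteSpace (F r)]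

theorem conjFieldHom_apply (a : ∀ r, F r →L[ℂ] F r) (t : X) :
    conjFieldHom Φ Ψ a t = conjCLM (Ψ t) (a (Φ t)) :=
  rfl

theorem norm_conjFieldHom_apply (a : ∀ r, F r →L[ℂ] F r) (t : X) :
    ‖conjFieldHom Φ Ψ a t‖ = ‖a (Φ t)‖ :=
  norm_conjCLM _ _

theorem fieldCoeff_conjFieldHom (a : ∀ r, F r →L[ℂ] F r) (x y : ∀ r, F r) :
    fieldCoeff (conjFieldHom Φ Ψ a) (transportField Φ Ψ x) (transportField Φ Ψ y) =
      fieldCoeff a x y ∘ Φ :=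
  funext fun t => inner_conjCLM_apply (Ψ t) (a (Φ t)) (x (Φ t)) (y (Φ t))

variable {Φ}

theorem iSup_norm_conjFieldHom (hΦ : Function.Surjective Φ) (a : ∀ r, F r →L[ℂ] F r) :
    ⨆ t, ‖conjFieldHom Φ Ψ a t‖ = ⨆ r, ‖a r‖ := by
  simp_rw [norm_conjFieldHom_apply]
  exact hΦ.iSup_comp fun r => ‖a r‖

theorem conjFieldHom_injective (hΦ : Function.Surjective Φ) :
    Function.Injective (conjFieldHom Φ Ψ) := by
  intro a b hab
  funext r
  obtain ⟨t, rfl⟩ := hΦ r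
  exact (Ψ t).conjStarAlgEquiv.injective (congrFun hab t)

variable [TopologicalSpace X] [TopologicalSpace Y]

theorem AlmostFinDim.map_conjFieldHom (hΦ : Continuous Φ) {Ω' : Set (∀ r, F r)}
    {Ω : Set (∀ t, E t)} (hΩ : ∀ σ ∈ Ω', transportField Φ Ψ σ ∈ Ω) {a : ∀ r, F r →L[ℂ] F r}
    (ha : AlmostFinDim Ω' a) : AlmostFinDim Ω (conjFieldHom Φ Ψ a) := by
  intro t₀ ε hε
  obtain ⟨V, hV, hV₀, n, σ, hσ, hVp⟩ := ha (Φ t₀) ε hε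
  refine ⟨Φ ⁻¹' V, hV.preimage hΦ, hV₀, n, fun i => transportField Φ Ψ (σ i),
    fun i => hΩ _ (hσ i), fun t ht => ?_⟩
  obtain ⟨hli, p, hidem, hsa, hrange, hnorm⟩ := hVp (Φ t) ht
  refine ⟨hli.map' _ (Ψ t).toLinearEquiv.ker, conjCLM (Ψ t) p,
    hidem.map (Ψ t).conjStarAlgEquiv, hsa.map (Ψ t).conjStarAlgEquiv, ?_, ?_⟩
  · rw [range_conjCLM, hrange, Submodule.map_span, ← Set.range_comp]
    rfl
  · rw [← norm_conjCLM (Ψ t)] at hnorm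
    simpa only [conjFieldHom_apply, conjCLM_eq_conjStarAlgEquiv, map_mul, map_sub] using hnorm

theorem conjFieldHom_mem_fellAlgebra [CompactSpace X] [CompactSpace Y] (hΦ : Continuous Φ)
    {S' : Set (∀ r, F r)} {S : Set (∀ t, E t)} (hS : transportField Φ Ψ '' S' = S)
    {D : Set X} (hD : Dense D) (hSD : ∀ s ∈ S, ∃ M, ∀ d ∈ D, ‖s d‖ ≤ M)
    {a : ∀ r, F r →L[ℂ] F r} (ha : a ∈ FellAlgebra {σ | LocUnifApprox S' σ}) :
    conjFieldHom Φ Ψ a ∈ FellAlgebra {ω | LocUnifApprox S ω} := by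
  obtain ⟨hweak, hafd, hcont, -⟩ := ha
  obtain ⟨C, hC⟩ := (isCompact_range hcont).bddAbove
  have hb : ∀ t, ‖conjFieldHom Φ Ψ a t‖ ≤ C := fun t =>
    (norm_conjFieldHom_apply Φ Ψ a t).trans_le (hC (mem_range_self _))
  have hbS : ∀ s₁ ∈ S, ∀ s₂ ∈ S, Continuous (fieldCoeff (conjFieldHom Φ Ψ a) s₁ s₂) := by
    rw [← hS]
    rintro _ ⟨σ₁, hσ₁, rfl⟩ _ ⟨σ₂, hσ₂, rfl⟩
    rw [fieldCoeff_conjFieldHom]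
    exact (hweak σ₁ (locUnifApprox_of_mem hσ₁) σ₂ (locUnifApprox_of_mem hσ₂)).comp hΦ
  refine ⟨weaklyCts_of_dense hD hSD hb hbS,
    hafd.map_conjFieldHom Ψ hΦ fun σ hσ =>
      LocUnifApprox.transport hΦ (fun s hs => hS ▸ mem_image_of_mem _ hs) hσ,
    by simp_rw [norm_conjFieldHom_apply]; exact hcont.comp hΦ, ?_⟩
  rw [cocompact_eq_bot]
  exact tendsto_bot

end Transport

theorem eq_conjFieldHom_of_extension {T : Type*} {H : T → Type*}
    [∀ t, NormedAddCommGroup (H t)] [∀ t, InnerProductSpace ℂ (H t)]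
    {X Y : Type*} [TopologicalSpace X] [TopologicalSpace Y] {E : X → Type*} {F : Y → Type*}
    [∀ u, NormedAddCommGroup (E u)] [∀ u, InnerProductSpace ℂ (E u)] [∀ u, CompleteSpace (E u)]
    [∀ r, NormedAddCommGroup (F r)] [∀ r, InnerProductSpace ℂ (F r)] [∀ r, CompleteSpace (F r)]
    {Φ : X → Y} (hΦ : Continuous Φ) (Ψ : ∀ t, F (Φ t) ≃ₗᵢ[ℂ] E t)
    {P Q : Set T} (hPQ : P ⊆ Q) {ιP : P → X} (hιP : DenseRange ιP) {ιQ : Q → Y}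
    (hΦι : ∀ x : P, Φ (ιP x) = ιQ (inclusion hPQ x))
    {barE : (∀ t, H t) → ∀ u, E u} {barF : (∀ t, H t) → ∀ r, F r} {A : Set (∀ t, H t)}
    (hΨ : ∀ t, ∀ ω ∈ A, Ψ t (barF ω (Φ t)) = barE ω t)
    (hdenseF : ∀ r, Dense ((fun ω => barF ω r) '' A))
    {eP : ∀ x : P, H x ≃ₗᵢ[ℂ] E (ιP x)} (heP : ∀ ω ∈ A, ∀ x : P, barE ω (ιP x) = eP x (ω x))
    {eQ : ∀ y : Q, H y ≃ₗᵢ[ℂ] F (ιQ y)} (heQ : ∀ ω ∈ A, ∀ y : Q, barF ω (ιQ y) = eQ y (ω y))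
    {a : ∀ t, H t →L[ℂ] H t} {dP : ∀ u, E u →L[ℂ] E u} {dQ : ∀ r, F r →L[ℂ] F r}
    (hdP_cont : Continuous fun u => ‖dP u‖) (hdQ_cont : Continuous fun r => ‖dQ r‖)
    (hdP_val : ∀ x : P, dP (ιP x) = conjCLM (eP x) (a x))
    (hdP_zero : ∀ u ∉ range ιP, dP u = 0)
    (hdQ_val : ∀ y : Q, dQ (ιQ y) = conjCLM (eQ y) (a y)) :
    dP = conjFieldHom Φ Ψ dQ := by
  have hval : ∀ x : P, dP (ιP x) = conjFieldHom Φ Ψ dQ (ιP x) := by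
    intro x
    let y := inclusion hPQ x
    have hcancel : (eQ y).trans ((eQ y).symm.trans (eP x)) = eP x := by ext v; simp
    have hagree : ∀ ω ∈ A,
        Ψ (ιP x) (barF ω (Φ (ιP x))) = ((eQ y).symm.trans (eP x)) (barF ω (ιQ y)) := by
      intro ω hω
      rw [hΨ _ ω hω, heP ω hω, heQ ω hω, LinearIsometryEquiv.trans_apply,
        LinearIsometryEquiv.symm_apply_apply]
    rw [hdP_val, conjFieldHom_apply, conjCLM_congr_of_dense (hΦι x) (hdenseF _) _ _ hagree,
      hdQ_val, ← conjCLM_trans, hcancel]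
  funext u
  by_cases hu : u ∈ range ιP
  · obtain ⟨x, rfl⟩ := hu
    exact hval x
  · have hnorm : (fun u => ‖dP u‖) = fun u => ‖conjFieldHom Φ Ψ dQ u‖ := by
      refine Continuous.ext_on hιP hdP_cont ?_ ?_
      · simp_rw [norm_conjFieldHom_apply]
        exact hdQ_cont.comp hΦ
      · rintro _ ⟨x, rfl⟩
        simp only [hval x]
    have h := congrFun hnorm u
    rw [hdP_zero u hu, norm_zero, eq_comm, norm_eq_zero] at h
    rw [hdP_zero u hu, h]

theorem pi_direct_system_general
    {T : Type}
    {H : T → Type} [∀ t, NormedAddCommGroup (H t)] [∀ t, InnerProductSpace ℂ (H t)]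
    (Ω : Set (∀ t, H t))
    (I J : Set (∀ t, H t →L[ℂ] H t))
    (hIJ : I ⊆ J)
    (hXIJ : (idealSupp I : Set T) ⊆ idealSupp J)
    {βXI βXJ βXK : Type}
    [TopologicalSpace βXI] [CompactSpace βXI] [T2Space βXI]
    [TopologicalSpace βXJ] [CompactSpace βXJ]
    [TopologicalSpace βXK]
    (ιI : idealSupp I → βXI) (hιId : DenseRange ιI)
    (ιJ : idealSupp J → βXJ)
    {HI : βXI → Type} [∀ u, NormedAddCommGroup (HI u)]
    [∀ u, InnerProductSpace ℂ (HI u)] [∀ u, CompleteSpace (HI u)]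
    {HJ : βXJ → Type} [∀ u, NormedAddCommGroup (HJ u)]
    [∀ u, InnerProductSpace ℂ (HJ u)] [∀ u, CompleteSpace (HJ u)]
    {HK : βXK → Type} [∀ u, NormedAddCommGroup (HK u)]
    [∀ u, InnerProductSpace ℂ (HK u)] [∀ u, CompleteSpace (HK u)]
    (barI : (∀ t, H t) → ∀ u, HI u) (barJ : (∀ t, H t) → ∀ u, HJ u)
    (barK : (∀ t, H t) → ∀ u, HK u)
    (hbarI_dense : ∀ (u : βXI) (v : HI u) (ε : ℝ), 0 < ε →
      ∃ ω ∈ boundedFields Ω, ‖barI ω u - v‖ < ε)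
    (hbarJ_dense : ∀ (u : βXJ) (v : HJ u) (ε : ℝ), 0 < ε →
      ∃ ω ∈ boundedFields Ω, ‖barJ ω u - v‖ < ε)
    (hbarK_dense : ∀ (u : βXK) (v : HK u) (ε : ℝ), 0 < ε →
      ∃ ω ∈ boundedFields Ω, ‖barK ω u - v‖ < ε)
    (ΦJI : βXI → βXJ) (hΦJI : Continuous ΦJI) (hΦJIsurj : Function.Surjective ΦJI)
    (hΦJIι : ∀ x : idealSupp I, ΦJI (ιI x) = ιJ (Set.inclusion hXIJ x))
    (ΦKJ : βXJ → βXK)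
    (ΦKI : βXI → βXK)
    (hΦcomp : ∀ t : βXI, ΦKI t = ΦKJ (ΦJI t))
    (ΨJI : ∀ t : βXI, HJ (ΦJI t) ≃ₗᵢ[ℂ] HI t)
    (ΨKJ : ∀ r : βXJ, HK (ΦKJ r) ≃ₗᵢ[ℂ] HJ r)
    (ΨKI : ∀ t : βXI, HK (ΦKI t) ≃ₗᵢ[ℂ] HI t)
    (hΨJI : ∀ (t : βXI), ∀ ω ∈ boundedFields Ω, ΨJI t (barJ ω (ΦJI t)) = barI ω t)
    (hΨKJ : ∀ (r : βXJ), ∀ ω ∈ boundedFields Ω, ΨKJ r (barK ω (ΦKJ r)) = barJ ω r)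
    (hΨKI : ∀ (t : βXI), ∀ ω ∈ boundedFields Ω, ΨKI t (barK ω (ΦKI t)) = barI ω t)
    -- the identifications `H^I_{ι_I x} = H_x`, `H^J_{ι_J x} = H_x` and the
    -- monomorphisms `δ_I : I → A^I`, `δ_J : J → A^J` of Proposition 2:
    (eI : ∀ x : idealSupp I, H x.1 ≃ₗᵢ[ℂ] HI (ιI x))
    (heI : ∀ ω ∈ boundedFields Ω, ∀ x : idealSupp I, barI ω (ιI x) = eI x (ω x.1))
    (eJ : ∀ x : idealSupp J, H x.1 ≃ₗᵢ[ℂ] HJ (ιJ x))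
    (heJ : ∀ ω ∈ boundedFields Ω, ∀ x : idealSupp J, barJ ω (ιJ x) = eJ x (ω x.1))
    (δI : (∀ t, H t →L[ℂ] H t) → ∀ u, HI u →L[ℂ] HI u)
    (hδI_mem : ∀ a ∈ I, δI a ∈
      FellAlgebra {ν : ∀ u, HI u | LocUnifApprox (barI '' boundedFields Ω) ν})
    (hδI_val : ∀ a ∈ I, ∀ x : idealSupp I, δI a (ιI x) = conjCLM (eI x) (a x.1))
    (hδI_zero : ∀ a ∈ I, ∀ u : βXI, u ∉ Set.range ιI → δI a u = 0)
    (δJ : (∀ t, H t →L[ℂ] H t) → ∀ u, HJ u →L[ℂ] HJ u)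
    (hδJ_mem : ∀ a ∈ J, δJ a ∈
      FellAlgebra {ν : ∀ u, HJ u | LocUnifApprox (barJ '' boundedFields Ω) ν})
    (hδJ_val : ∀ a ∈ J, ∀ x : idealSupp J, δJ a (ιJ x) = conjCLM (eJ x) (a x.1))
 :
    -- `π_{JI}` maps `A^J` into `A^I` …
    (∀ a ∈ FellAlgebra {ν : ∀ u, HJ u | LocUnifApprox (barJ '' boundedFields Ω) ν},
      (fun t => conjCLM (ΨJI t) (a (ΦJI t))) ∈
        FellAlgebra {ν : ∀ u, HI u | LocUnifApprox (barI '' boundedFields Ω) ν}) ∧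
    -- … is a *-homomorphism …
    (∀ a b : ∀ u, HJ u →L[ℂ] HJ u,
      (fun t => conjCLM (ΨJI t) ((a + b) (ΦJI t))) =
        (fun t => conjCLM (ΨJI t) (a (ΦJI t))) + fun t => conjCLM (ΨJI t) (b (ΦJI t))) ∧
    (∀ (c : ℂ) (a : ∀ u, HJ u →L[ℂ] HJ u),
      (fun t => conjCLM (ΨJI t) ((c • a) (ΦJI t))) =
        c • fun t => conjCLM (ΨJI t) (a (ΦJI t))) ∧
    (∀ a b : ∀ u, HJ u →L[ℂ] HJ u,
      (fun t => conjCLM (ΨJI t) ((a * b) (ΦJI t))) =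
        (fun t => conjCLM (ΨJI t) (a (ΦJI t))) * fun t => conjCLM (ΨJI t) (b (ΦJI t))) ∧
    (∀ a : ∀ u, HJ u →L[ℂ] HJ u,
      (fun t => conjCLM (ΨJI t) ((star a) (ΦJI t))) =
        star fun t => conjCLM (ΨJI t) (a (ΦJI t))) ∧
    -- … which is isometric:
    (∀ a : ∀ u, HJ u →L[ℂ] HJ u,
      (⨆ t : βXI, ‖conjCLM (ΨJI t) (a (ΦJI t))‖) = ⨆ r : βXJ, ‖a r‖) ∧
    (∀ a b : ∀ u, HJ u →L[ℂ] HJ u,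
      (fun t => conjCLM (ΨJI t) (a (ΦJI t))) = (fun t => conjCLM (ΨJI t) (b (ΦJI t)))
        → a = b) ∧
    -- `π_{II} = id`:
    (∀ (ΦII : βXI → βXI), Continuous ΦII → (∀ x : idealSupp I, ΦII (ιI x) = ιI x) →
      ∀ (ΨII : ∀ t : βXI, HI (ΦII t) ≃ₗᵢ[ℂ] HI t),
      (∀ (t : βXI), ∀ ω ∈ boundedFields Ω, ΨII t (barI ω (ΦII t)) = barI ω t) →
      ∀ a ∈ FellAlgebra {ν : ∀ u, HI u | LocUnifApprox (barI '' boundedFields Ω) ν},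
        (fun t => conjCLM (ΨII t) (a (ΦII t))) = a) ∧
    -- `π_{KI} = π_{JI} ∘ π_{KJ}`:
    (∀ a ∈ FellAlgebra {ν : ∀ u, HK u | LocUnifApprox (barK '' boundedFields Ω) ν},
      (fun t => conjCLM (ΨKI t) (a (ΦKI t))) =
        fun t => conjCLM (ΨJI t) (conjCLM (ΨKJ (ΦJI t)) (a (ΦKJ (ΦJI t))))) ∧
    -- `δ_I = π_{JI} ∘ δ_J|_I`:
    (∀ a ∈ I, δI a = fun t => conjCLM (ΨJI t) (δJ a (ΦJI t))) := by
  have hS : transportField ΦJI ΨJI '' (barJ '' boundedFields Ω) = barI '' boundedFields Ω := by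
    rw [image_image]
    exact image_congr fun μ hμ => funext fun t => hΨJI t μ hμ
  have hSD : ∀ s ∈ barI '' boundedFields Ω, ∃ M, ∀ d ∈ range ιI, ‖s d‖ ≤ M := by
    rintro _ ⟨μ, hμ, rfl⟩
    obtain ⟨M, hM⟩ := hμ.2
    refine ⟨M, ?_⟩
    rintro _ ⟨x, rfl⟩
    rw [heI μ hμ x, LinearIsometryEquiv.norm_map]
    exact hM x
  refine ⟨fun a ha => conjFieldHom_mem_fellAlgebra ΨJI hΦJI hS hιId hSD ha,
    map_add (conjFieldHom ΦJI ΨJI), map_smul (conjFieldHom ΦJI ΨJI),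
    map_mul (conjFieldHom ΦJI ΨJI), map_star (conjFieldHom ΦJI ΨJI),
    iSup_norm_conjFieldHom ΨJI hΦJIsurj, fun _ _ h => conjFieldHom_injective ΨJI hΦJIsurj h,
    ?_, ?_, fun a ha => ?_⟩
  · intro ΦII hΦII hΦIIι ΨII hΨII a _
    have hid : ΦII = id :=
      Continuous.ext_on hιId hΦII continuous_id (by rintro _ ⟨x, rfl⟩; exact hΦIIι x)
    exact funext fun t => conjCLM_congr_of_dense (congrFun hid t)
      (dense_image_of_forall_norm_sub_lt (hbarI_dense t)) (ΨII t) (.refl ℂ _) (hΨII t) a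
  · intro a _
    refine funext fun t => conjCLM_congr_of_dense (hΦcomp t)
      (dense_image_of_forall_norm_sub_lt (hbarK_dense _)) (ΨKI t) ((ΨKJ (ΦJI t)).trans (ΨJI t))
      (fun ω hω => ?_) a
    rw [hΨKI t ω hω, LinearIsometryEquiv.trans_apply, hΨKJ _ ω hω, hΨJI t ω hω]
  · exact eq_conjFieldHom_of_extension hΦJI ΨJI hXIJ hιId hΦJIι hΨJI
      (fun r => dense_image_of_forall_norm_sub_lt (hbarJ_dense r)) heI heJ
      (hδI_mem a ha).2.2.1 (hδJ_mem a (hIJ ha)).2.2.1 (hδI_val a ha) (hδI_zero a ha)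
      (hδJ_val a (hIJ ha))

/-- Proposition `systems2`.  For essential ideals `I ⊆ J` of
the Fell algebra `A`, the conjugation maps
`π_{JI}(a) = (t ↦ Ψ_{JIt} a(Φ_{JI}t) Ψ_{JIt}⁻¹)` carry `A^J` into `A^I`, are
isometric *-monomorphisms, form a direct system (`π_{II} = id`,
`π_{KI} = π_{JI} ∘ π_{KJ}`), and satisfy `δ_I = π_{JI} ∘ δ_J|_I`. -/
theorem pi_direct_system
    {T : Type} [TopologicalSpace T] [LocallyCompactSpace T] [T2Space T]
    {H : T → Type} [∀ t, NormedAddCommGroup (H t)] [∀ t, InnerProductSpace ℂ (H t)]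
    [∀ t, CompleteSpace (H t)]
    (Ω : Set (∀ t, H t)) (hΩ : IsCtsHilbertBundle Ω)
    (I J K : Set (∀ t, H t →L[ℂ] H t))
    (hI : IsEssentialIdealOf (FellAlgebra Ω) I)
    (hJ : IsEssentialIdealOf (FellAlgebra Ω) J)
    (hK : IsEssentialIdealOf (FellAlgebra Ω) K)
    (hIJ : I ⊆ J) (hJK : J ⊆ K)
    (hXIJ : (idealSupp I : Set T) ⊆ idealSupp J)
    (hXJK : (idealSupp J : Set T) ⊆ idealSupp K)
    {βXI βXJ βXK : Type}
    [TopologicalSpace βXI] [CompactSpace βXI] [T2Space βXI]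
    [TopologicalSpace βXJ] [CompactSpace βXJ] [T2Space βXJ]
    [TopologicalSpace βXK] [CompactSpace βXK] [T2Space βXK]
    (ιI : idealSupp I → βXI) (hιI : Topology.IsEmbedding ιI) (hιId : DenseRange ιI)
    (ιJ : idealSupp J → βXJ) (hιJ : Topology.IsEmbedding ιJ) (hιJd : DenseRange ιJ)
    (ιK : idealSupp K → βXK) (hιK : Topology.IsEmbedding ιK) (hιKd : DenseRange ιK)
    {HI : βXI → Type} [∀ u, NormedAddCommGroup (HI u)]
    [∀ u, InnerProductSpace ℂ (HI u)] [∀ u, CompleteSpace (HI u)]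
    {HJ : βXJ → Type} [∀ u, NormedAddCommGroup (HJ u)]
    [∀ u, InnerProductSpace ℂ (HJ u)] [∀ u, CompleteSpace (HJ u)]
    {HK : βXK → Type} [∀ u, NormedAddCommGroup (HK u)]
    [∀ u, InnerProductSpace ℂ (HK u)] [∀ u, CompleteSpace (HK u)]
    (barI : (∀ t, H t) → ∀ u, HI u) (barJ : (∀ t, H t) → ∀ u, HJ u)
    (barK : (∀ t, H t) → ∀ u, HK u)
    (hbarI_dense : ∀ (u : βXI) (v : HI u) (ε : ℝ), 0 < ε →
      ∃ ω ∈ boundedFields Ω, ‖barI ω u - v‖ < ε)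
    (hbarJ_dense : ∀ (u : βXJ) (v : HJ u) (ε : ℝ), 0 < ε →
      ∃ ω ∈ boundedFields Ω, ‖barJ ω u - v‖ < ε)
    (hbarK_dense : ∀ (u : βXK) (v : HK u) (ε : ℝ), 0 < ε →
      ∃ ω ∈ boundedFields Ω, ‖barK ω u - v‖ < ε)
    (ΦJI : βXI → βXJ) (hΦJI : Continuous ΦJI) (hΦJIsurj : Function.Surjective ΦJI)
    (hΦJIι : ∀ x : idealSupp I, ΦJI (ιI x) = ιJ (Set.inclusion hXIJ x))
    (ΦKJ : βXJ → βXK) (hΦKJ : Continuous ΦKJ) (hΦKJsurj : Function.Surjective ΦKJ)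
    (hΦKJι : ∀ x : idealSupp J, ΦKJ (ιJ x) = ιK (Set.inclusion hXJK x))
    (ΦKI : βXI → βXK) (hΦKI : Continuous ΦKI) (hΦKIsurj : Function.Surjective ΦKI)
    (hΦKIι : ∀ x : idealSupp I,
      ΦKI (ιI x) = ιK (Set.inclusion (hXIJ.trans hXJK) x))
    (hΦcomp : ∀ t : βXI, ΦKI t = ΦKJ (ΦJI t))
    (ΨJI : ∀ t : βXI, HJ (ΦJI t) ≃ₗᵢ[ℂ] HI t)
    (ΨKJ : ∀ r : βXJ, HK (ΦKJ r) ≃ₗᵢ[ℂ] HJ r)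
    (ΨKI : ∀ t : βXI, HK (ΦKI t) ≃ₗᵢ[ℂ] HI t)
    (hΨJI : ∀ (t : βXI), ∀ ω ∈ boundedFields Ω, ΨJI t (barJ ω (ΦJI t)) = barI ω t)
    (hΨKJ : ∀ (r : βXJ), ∀ ω ∈ boundedFields Ω, ΨKJ r (barK ω (ΦKJ r)) = barJ ω r)
    (hΨKI : ∀ (t : βXI), ∀ ω ∈ boundedFields Ω, ΨKI t (barK ω (ΦKI t)) = barI ω t)
    -- the identifications `H^I_{ι_I x} = H_x`, `H^J_{ι_J x} = H_x` and the
    -- monomorphisms `δ_I : I → A^I`, `δ_J : J → A^J` of Proposition 2: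
    (eI : ∀ x : idealSupp I, H x.1 ≃ₗᵢ[ℂ] HI (ιI x))
    (heI : ∀ ω ∈ boundedFields Ω, ∀ x : idealSupp I, barI ω (ιI x) = eI x (ω x.1))
    (eJ : ∀ x : idealSupp J, H x.1 ≃ₗᵢ[ℂ] HJ (ιJ x))
    (heJ : ∀ ω ∈ boundedFields Ω, ∀ x : idealSupp J, barJ ω (ιJ x) = eJ x (ω x.1))
    (δI : (∀ t, H t →L[ℂ] H t) → ∀ u, HI u →L[ℂ] HI u)
    (hδI_mem : ∀ a ∈ I, δI a ∈
      FellAlgebra {ν : ∀ u, HI u | LocUnifApprox (barI '' boundedFields Ω) ν})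
    (hδI_val : ∀ a ∈ I, ∀ x : idealSupp I, δI a (ιI x) = conjCLM (eI x) (a x.1))
    (hδI_zero : ∀ a ∈ I, ∀ u : βXI, u ∉ Set.range ιI → δI a u = 0)
    (δJ : (∀ t, H t →L[ℂ] H t) → ∀ u, HJ u →L[ℂ] HJ u)
    (hδJ_mem : ∀ a ∈ J, δJ a ∈
      FellAlgebra {ν : ∀ u, HJ u | LocUnifApprox (barJ '' boundedFields Ω) ν})
    (hδJ_val : ∀ a ∈ J, ∀ x : idealSupp J, δJ a (ιJ x) = conjCLM (eJ x) (a x.1))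
    (hδJ_zero : ∀ a ∈ J, ∀ u : βXJ, u ∉ Set.range ιJ → δJ a u = 0) :
    -- `π_{JI}` maps `A^J` into `A^I` …
    (∀ a ∈ FellAlgebra {ν : ∀ u, HJ u | LocUnifApprox (barJ '' boundedFields Ω) ν},
      (fun t => conjCLM (ΨJI t) (a (ΦJI t))) ∈
        FellAlgebra {ν : ∀ u, HI u | LocUnifApprox (barI '' boundedFields Ω) ν}) ∧
    -- … is a *-homomorphism …
    (∀ a b : ∀ u, HJ u →L[ℂ] HJ u,
      (fun t => conjCLM (ΨJI t) ((a + b) (ΦJI t))) =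
        (fun t => conjCLM (ΨJI t) (a (ΦJI t))) + fun t => conjCLM (ΨJI t) (b (ΦJI t))) ∧
    (∀ (c : ℂ) (a : ∀ u, HJ u →L[ℂ] HJ u),
      (fun t => conjCLM (ΨJI t) ((c • a) (ΦJI t))) =
        c • fun t => conjCLM (ΨJI t) (a (ΦJI t))) ∧
    (∀ a b : ∀ u, HJ u →L[ℂ] HJ u,
      (fun t => conjCLM (ΨJI t) ((a * b) (ΦJI t))) =
        (fun t => conjCLM (ΨJI t) (a (ΦJI t))) * fun t => conjCLM (ΨJI t) (b (ΦJI t))) ∧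
    (∀ a : ∀ u, HJ u →L[ℂ] HJ u,
      (fun t => conjCLM (ΨJI t) ((star a) (ΦJI t))) =
        star fun t => conjCLM (ΨJI t) (a (ΦJI t))) ∧
    -- … which is isometric:
    (∀ a : ∀ u, HJ u →L[ℂ] HJ u,
      (⨆ t : βXI, ‖conjCLM (ΨJI t) (a (ΦJI t))‖) = ⨆ r : βXJ, ‖a r‖) ∧
    (∀ a b : ∀ u, HJ u →L[ℂ] HJ u,
      (fun t => conjCLM (ΨJI t) (a (ΦJI t))) = (fun t => conjCLM (ΨJI t) (b (ΦJI t)))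
        → a = b) ∧
    -- `π_{II} = id`:
    (∀ (ΦII : βXI → βXI), Continuous ΦII → (∀ x : idealSupp I, ΦII (ιI x) = ιI x) →
      ∀ (ΨII : ∀ t : βXI, HI (ΦII t) ≃ₗᵢ[ℂ] HI t),
      (∀ (t : βXI), ∀ ω ∈ boundedFields Ω, ΨII t (barI ω (ΦII t)) = barI ω t) →
      ∀ a ∈ FellAlgebra {ν : ∀ u, HI u | LocUnifApprox (barI '' boundedFields Ω) ν},
        (fun t => conjCLM (ΨII t) (a (ΦII t))) = a) ∧
    -- `π_{KI} = π_{JI} ∘ π_{KJ}`: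
    (∀ a ∈ FellAlgebra {ν : ∀ u, HK u | LocUnifApprox (barK '' boundedFields Ω) ν},
      (fun t => conjCLM (ΨKI t) (a (ΦKI t))) =
        fun t => conjCLM (ΨJI t) (conjCLM (ΨKJ (ΦJI t)) (a (ΦKJ (ΦJI t))))) ∧
    -- `δ_I = π_{JI} ∘ δ_J|_I`:
    (∀ a ∈ I, δI a = fun t => conjCLM (ΨJI t) (δJ a (ΦJI t))) :=
  pi_direct_system_general Ω I J hIJ hXIJ ιI hιId ιJ barI barJ barK hbarI_dense hbarJ_dense
    hbarK_dense ΦJI hΦJI hΦJIsurj hΦJIι ΦKJ ΦKI hΦcomp ΨJI ΨKJ ΨKI hΨJI hΨKJ hΨKI eI heI eJ heJ δI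
    hδI_mem hδI_val hδI_zero δJ hδJ_mem hδJ_val
end

section
/- Let A = A(T, {H_t}, Ω) be the Fell C*-algebra of a continuous Hilbert bundle over a locally compact Hausdorff space T. Then A = C₀(T, {K(H_t)}_{t∈T}, F(Ω₀)); that is, an operator field a with t ↦ ‖a(t)‖ in C₀(T) belongs to A if and only if a(t) ∈ K(H_t) for every t and a is continuous with respect to F(Ω₀) (a local uniform limit of finite-rank fields from F(Ω₀)). -/
/-!
Near `t₀` an almost finite-dimensional field `a` is approximated by `p_t a(t) p_t`, where `p_t`
projects onto the span of linearly independent `σᵢ(t)`, `σᵢ ∈ Ω`. With the Gram matrix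
`G = (⟪σᵢ, σⱼ⟫)` one has `p_t = ∑ (G⁻¹)ᵢⱼ Θ_{σᵢ,σⱼ}`, hence `p_t a p_t = ∑ Dᵢₗ Θ_{σᵢ,σₗ}` with
`D = G⁻¹ (⟪σⱼ, a σₖ⟫) G⁻¹`, continuous by weak continuity of `a`. Multiplying the coefficients by a
compactly supported bump equal to `1` near `t₀` yields fields of `Ω₀`, so `a` is a local uniform
limit of fields of `F(Ω₀)`; in particular each `a(t)` is a norm limit of finite-rank operators.

Conversely, weak continuity passes to local uniform limits. If `κ = ∑ Θ_{ωᵢ,νᵢ}` approximates `a`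
near `t₀`, pick among the `ωᵢ, νᵢ` fields `σ` whose values at `t₀` form a basis of the span of all
`ωᵢ(t₀), νᵢ(t₀)`. The `σ(t)` stay independent near `t₀` (the Gram determinant is continuous), and
the distances from `ωᵢ(t), νᵢ(t)` to the span of the `σ(t)` are continuous at `t₀`, where they
vanish. So `‖p_t κ p_t - κ‖ → 0`, and `‖p_t a p_t - a‖ ≤ ‖p_t κ p_t - κ‖ + 2 ‖a - κ‖` is small.
-/

open InnerProductSpace Matrix Set Submodule Filter Topology

instance Submodule.finiteDimensional_span_range {K V ι : Type*} [DivisionRing K] [AddCommGroup V]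
    [Module K V] [Finite ι] (v : ι → V) : FiniteDimensional K (span K (range v)) :=
  .span_of_finite K (finite_range v)

theorem exists_fin_linearIndependent_comp_span_eq {K V ι : Type*} [DivisionRing K]
    [AddCommGroup V] [Module K V] [Finite ι] (v : ι → V) :
    ∃ (m : ℕ) (s : Fin m → ι), LinearIndependent K (v ∘ s) ∧
      span K (range (v ∘ s)) = span K (range v) := by
  obtain ⟨κ, f, hf, hspan, hli⟩ := exists_linearIndependent' K v
  have : Finite κ := Finite.of_injective f hf
  let e := (Finite.equivFin κ).symm
  refine ⟨Nat.card κ, f ∘ e, hli.comp e e.injective, ?_⟩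
  rw [← hspan, ← Function.comp_assoc, EquivLike.range_comp]

theorem norm_mul_mul_sub_le_of_norm_le_one {R : Type*} [SeminormedRing R] {p : R} (hp : ‖p‖ ≤ 1)
    (a b : R) : ‖p * a * p - a‖ ≤ ‖p * b * p - b‖ + 2 * ‖a - b‖ := by
  have hsplit : p * a * p - a = p * (a - b) * p + (p * b * p - b) - (a - b) := by noncomm_ring
  have hcompress : ‖p * (a - b) * p‖ ≤ ‖a - b‖ :=
    calc ‖p * (a - b) * p‖ ≤ ‖p‖ * ‖a - b‖ * ‖p‖ := norm_mul₃_le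
      _ ≤ 1 * ‖a - b‖ * 1 := by gcongr
      _ = ‖a - b‖ := by ring
  rw [hsplit]
  linarith [norm_sub_le (p * (a - b) * p + (p * b * p - b)) (a - b),
    norm_add_le (p * (a - b) * p) (p * b * p - b)]

theorem exists_continuous_hasCompactSupport_eventuallyEq_one {X : Type*} [TopologicalSpace X]
    [R1Space X] [LocallyCompactSpace X] {U : Set X} (hU : IsOpen U) {x : X} (hx : x ∈ U) :
    ∃ φ : X → ℂ, Continuous φ ∧ HasCompactSupport φ ∧ tsupport φ ⊆ U ∧ φ =ᶠ[𝓝 x] 1 := by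
  obtain ⟨K, hK, hxK, hKU⟩ := exists_compact_subset hU hx
  obtain ⟨f, hf1, hfc, hfU, -⟩ := exists_continuousMap_one_of_isCompact_subset_isOpen hK hU hKU
  refine ⟨fun y => (f y : ℂ), Complex.continuous_ofReal.comp f.continuous,
    HasCompactSupport.comp_left hfc Complex.ofReal_zero,
    (tsupport_comp_subset Complex.ofReal_zero _).trans hfU, ?_⟩
  filter_upwards [mem_interior_iff_mem_nhds.1 hxK] with y hy
  simp [hf1 hy]

section HilbertSpace

variable {E : Type*} [NormedAddCommGroup E] [InnerProductSpace ℂ E]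

theorem isCompactOperator_rankOne (w u : E) : IsCompactOperator (rankOne ℂ w u) :=
  (isCompactOperator_of_locallyCompactSpace_rng
    (ContinuousLinearMap.toSpanSingleton ℂ w)).comp_clm (innerSL ℂ u)

theorem rankOne_mul_mul_rankOne (w x y z : E) (a : E →L[ℂ] E) :
    rankOne ℂ w x * a * rankOne ℂ y z = inner ℂ x (a y) • rankOne ℂ w z := by
  ext u
  simp [smul_smul, mul_comm]

theorem starProjection_span_range_eq_sum_gram_inv {ι : Type*} [Fintype ι] [DecidableEq ι]
    {v : ι → E} (hv : LinearIndependent ℂ v) :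
    (span ℂ (range v)).starProjection =
      ∑ i, ∑ j, (gram ℂ v)⁻¹ i j • rankOne ℂ (v i) (v j) := by
  set Q : E →L[ℂ] E := ∑ i, ∑ j, (gram ℂ v)⁻¹ i j • rankOne ℂ (v i) (v j)
  have hG : gram ℂ v * (gram ℂ v)⁻¹ = 1 :=
    mul_nonsing_inv _ (isUnit_iff_ne_zero.2 (det_gram_ne_zero_iff_linearIndependent.2 hv))
  have hQ_mem (x : E) : Q x ∈ span ℂ (range v) := by
    simp only [Q, _root_.sum_apply, _root_.smul_apply, rankOne_apply]
    exact sum_mem fun i _ => sum_mem fun j _ =>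
      smul_mem _ _ (smul_mem _ _ (subset_span (mem_range_self i)))
  have hQ_inner (x : E) (k : ι) : inner ℂ (v k) (Q x) = inner ℂ (v k) x := by
    have hk j := congrFun (congrFun hG k) j
    simp only [Matrix.mul_apply, Matrix.one_apply, gram_apply] at hk
    simp only [Q, _root_.sum_apply, _root_.smul_apply, rankOne_apply, inner_sum, inner_smul_right]
    rw [Finset.sum_comm]
    simp_rw [← mul_assoc, mul_comm _ (inner ℂ (v k) (v _)), ← mul_assoc, ← Finset.sum_mul, hk]
    simp
  ext x
  refine eq_starProjection_of_mem_of_inner_eq_zero (hQ_mem x) fun w hw => ?_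
  have hspan : span ℂ (range v) ≤ LinearMap.ker (innerₛₗ ℂ (x - Q x)) :=
    span_le.2 <| range_subset_iff.2 fun k => by
      rw [SetLike.mem_coe, LinearMap.mem_ker, innerₛₗ_apply_apply, inner_eq_zero_symm,
        inner_sub_right, hQ_inner, sub_self]
  exact hspan hw

theorem sum_smul_rankOne_mul_mul_sum_smul_rankOne {ι : Type*} [Fintype ι] (v : ι → E)
    (A B : Matrix ι ι ℂ) (a : E →L[ℂ] E) :
    (∑ i, ∑ j, A i j • rankOne ℂ (v i) (v j)) * a * (∑ i, ∑ j, B i j • rankOne ℂ (v i) (v j)) =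
      ∑ i, ∑ l, (A * of (fun j k => inner ℂ (v j) (a (v k))) * B) i l • rankOne ℂ (v i) (v l) := by
  simp only [Finset.sum_mul]
  simp only [Finset.mul_sum, smul_mul_assoc, mul_smul_comm, smul_smul, rankOne_mul_mul_rankOne,
    Matrix.mul_apply, of_apply, Finset.sum_mul, Finset.sum_smul]
  refine Finset.sum_congr rfl fun i _ => ?_
  refine (Finset.sum_congr rfl fun j _ => Finset.sum_comm).trans (Finset.sum_comm.trans ?_)
  refine Finset.sum_congr rfl fun l _ => Finset.sum_comm.trans ?_
  exact Finset.sum_congr rfl fun k _ => Finset.sum_congr rfl fun j _ => by ring_nf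

theorem eq_starProjection_of_isIdempotentElem_of_isSelfAdjoint [CompleteSpace E]
    {p : E →L[ℂ] E} (hp : IsIdempotentElem p) (hp' : IsSelfAdjoint p) {K : Submodule ℂ E}
    [K.HasOrthogonalProjection] (hK : LinearMap.range (p : E →ₗ[ℂ] E) = K) :
    p = K.starProjection :=
  ContinuousLinearMap.IsStarProjection.ext ⟨hp, hp'⟩ isStarProjection_starProjection (by
    rw [range_starProjection]; exact hK)

theorem norm_starProjection_mul_rankOne_mul_sub_le (K : Submodule ℂ E)
    [K.HasOrthogonalProjection] (w u : E) :
    ‖K.starProjection * rankOne ℂ w u * K.starProjection - rankOne ℂ w u‖ ≤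
      ‖K.starProjection w - w‖ * ‖u‖ + ‖w‖ * ‖K.starProjection u - u‖ := by
  have hcompress : K.starProjection * rankOne ℂ w u * K.starProjection =
      rankOne ℂ (K.starProjection w) (K.starProjection u) := by
    ext x
    simp [K.inner_starProjection_left_eq_right]
  have hsplit : rankOne ℂ (K.starProjection w) (K.starProjection u) - rankOne ℂ w u =
      rankOne ℂ (K.starProjection w - w) (K.starProjection u) +
        rankOne ℂ w (K.starProjection u - u) := by
    simp only [map_sub, _root_.sub_apply]
    abel
  rw [hcompress, hsplit]
  refine (norm_add_le _ _).trans (add_le_add ?_ ?_)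
  · rw [norm_rankOne]
    gcongr
    exact K.norm_starProjection_apply_le u
  · rw [norm_rankOne]

theorem norm_starProjection_mul_sum_rankOne_mul_sub_le {ι : Type*} [Fintype ι]
    (K : Submodule ℂ E) [K.HasOrthogonalProjection] (w u : ι → E) :
    ‖K.starProjection * (∑ i, rankOne ℂ (w i) (u i)) * K.starProjection -
        ∑ i, rankOne ℂ (w i) (u i)‖ ≤
      ∑ i, (‖K.starProjection (w i) - w i‖ * ‖u i‖ + ‖w i‖ * ‖K.starProjection (u i) - u i‖) := by
  rw [Finset.mul_sum, Finset.sum_mul, ← Finset.sum_sub_distrib]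
  exact (norm_sum_le _ _).trans
    (Finset.sum_le_sum fun i _ => norm_starProjection_mul_rankOne_mul_sub_le K (w i) (u i))

end HilbertSpace

section FiniteRankFields

variable {T : Type*} {H : T → Type*} [∀ t, NormedAddCommGroup (H t)]
  [∀ t, InnerProductSpace ℂ (H t)] {S : Set (∀ t, H t)}

theorem sum_rankOneField_mem_finRankFields {ι : Type*} [Fintype ι] {ω ν : ι → ∀ t, H t}
    (hω : ∀ i, ω i ∈ S) (hν : ∀ i, ν i ∈ S) :
    (fun t => ∑ i, rankOneField (ω i) (ν i) t) ∈ finRankFields S := by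
  let e := (Fintype.equivFin ι).symm
  exact ⟨Fintype.card ι, ω ∘ e, ν ∘ e, fun _ => hω _, fun _ => hν _,
    funext fun t => (e.sum_comp fun i => rankOneField (ω i) (ν i) t).symm⟩

theorem isCompactOperator_of_mem_finRankFields {κ : ∀ t, H t →L[ℂ] H t}
    (hκ : κ ∈ finRankFields S) (t : T) : IsCompactOperator (κ t) := by
  obtain ⟨n, ω, ν, -, -, rfl⟩ := hκ
  exact (compactOperator (RingHom.id ℂ) (H t) (H t)).sum_mem fun i _ =>
    isCompactOperator_rankOne (ω i t) (ν i t)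

theorem isCompactOperator_of_locUnifApprox_finRankFields [TopologicalSpace T]
    [∀ t, CompleteSpace (H t)] {a : ∀ t, H t →L[ℂ] H t} (ha : LocUnifApprox (finRankFields S) a)
    (t : T) : IsCompactOperator (a t) := by
  refine isClosed_setOfPred_isCompactOperator.closure_subset
    (Metric.mem_closure_iff.2 fun ε hε => ?_)
  obtain ⟨U, -, htU, κ, hκ, hκa⟩ := ha t ε hε
  exact ⟨κ t, isCompactOperator_of_mem_finRankFields hκ t, by
    rw [dist_comm, dist_eq_norm]; exact hκa t htU⟩

end FiniteRankFields

section HilbertBundle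

variable {T : Type*} [TopologicalSpace T] {H : T → Type*} [∀ t, NormedAddCommGroup (H t)]
  [∀ t, InnerProductSpace ℂ (H t)] {Ω : Set (∀ t, H t)}

def c0Fields (Ω : Set (∀ t, H t)) : Set (∀ t, H t) :=
  {ω ∈ Ω | Tendsto (fun t => ‖ω t‖) (cocompact T) (𝓝 0)}

namespace IsCtsHilbertBundle

def submodule (hΩ : IsCtsHilbertBundle Ω) : Submodule ℂ (∀ t, H t) where
  carrier := Ω
  add_mem' hω hν := hΩ.add_mem _ hω _ hν
  zero_mem' := hΩ.zero_mem
  smul_mem' c ω hω := hΩ.smul_mem (ContinuousMap.const T c) ω hω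

theorem continuous_inner (hΩ : IsCtsHilbertBundle Ω) {ω ν : ∀ t, H t} (hω : ω ∈ Ω)
    (hν : ν ∈ Ω) : Continuous fun t => inner ℂ (ω t) (ν t) := by
  have hnorm (c : ℂ) : Continuous fun t => ((‖ω t + c • ν t‖ : ℝ) : ℂ) :=
    Complex.continuous_ofReal.comp <| hΩ.norm_continuous _ <|
      hΩ.submodule.add_mem hω (hΩ.submodule.smul_mem c hν)
  refine (((((hnorm 1).pow 2).sub ((hnorm (-1)).pow 2)).add
    ((((hnorm (-Complex.I)).pow 2).sub ((hnorm Complex.I).pow 2)).mul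
      (continuous_const (y := Complex.I)))).div_const 4).congr fun t => ?_
  simp [inner_eq_sum_norm_sq_div_four (ω t) (ν t), sub_eq_add_neg]

theorem exists_mem_c0Fields_eventuallyEq_smul [R1Space T] [LocallyCompactSpace T]
    (hΩ : IsCtsHilbertBundle Ω) {U : Set T} (hU : IsOpen U) {t₀ : T} (ht₀ : t₀ ∈ U)
    {c : T → ℂ} (hc : ContinuousOn c U) {ω : ∀ t, H t} (hω : ω ∈ Ω) :
    ∃ ξ ∈ c0Fields Ω, ∀ᶠ t in 𝓝 t₀, ξ t = c t • ω t := by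
  obtain ⟨φ, hφ, hφc, hφU, hφ1⟩ := exists_continuous_hasCompactSupport_eventuallyEq_one hU ht₀
  have hφc' : Continuous fun t => φ t * c t :=
    (hφ.continuousOn.mul hc).continuous_of_tsupport_subset hU (tsupport_mul_subset_left.trans hφU)
  refine ⟨fun t => (φ t * c t) • ω t, ⟨hΩ.smul_mem ⟨_, hφc'⟩ ω hω, ?_⟩, ?_⟩
  · simp_rw [norm_smul]
    exact (hφc.mul_right.norm.mul_right).is_zero_at_infty
  · filter_upwards [hφ1] with t ht
    simp [ht]

variable {ι : Type*} {σ : ι → ∀ t, H t}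

theorem continuous_gram (hΩ : IsCtsHilbertBundle Ω) (hσ : ∀ i, σ i ∈ Ω) :
    Continuous fun t => gram ℂ (σ · t) :=
  continuous_matrix fun i j => hΩ.continuous_inner (hσ i) (hσ j)

variable [Fintype ι] [DecidableEq ι]

theorem isOpen_setOf_linearIndependent (hΩ : IsCtsHilbertBundle Ω) (hσ : ∀ i, σ i ∈ Ω) :
    IsOpen {t | LinearIndependent ℂ (σ · t)} := by
  simp_rw [← det_gram_ne_zero_iff_linearIndependent]
  exact isOpen_ne_fun (hΩ.continuous_gram hσ).matrix_det continuous_const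

theorem continuousOn_gram_inv (hΩ : IsCtsHilbertBundle Ω) (hσ : ∀ i, σ i ∈ Ω) :
    ContinuousOn (fun t => (gram ℂ (σ · t))⁻¹) {t | LinearIndependent ℂ (σ · t)} := by
  intro t ht
  have hdet : (gram ℂ (σ · t)).det ≠ 0 := det_gram_ne_zero_iff_linearIndependent.2 ht
  refine ((continuousAt_matrix_inv _ ?_).comp
    (hΩ.continuous_gram hσ).continuousAt).continuousWithinAt
  rw [Ring.inverse_eq_inv']
  exact continuousAt_inv₀ hdet

theorem continuousAt_norm_starProjection_sub [R1Space T] [LocallyCompactSpace T]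
    (hΩ : IsCtsHilbertBundle Ω) (hσ : ∀ i, σ i ∈ Ω) {t₀ : T}
    (hli : LinearIndependent ℂ (σ · t₀)) {ω : ∀ t, H t} (hω : ω ∈ Ω) :
    ContinuousAt (fun t => ‖(span ℂ (range (σ · t))).starProjection (ω t) - ω t‖) t₀ := by
  have hU := hΩ.isOpen_setOf_linearIndependent hσ
  set c : ι → T → ℂ := fun i t => ∑ j, (gram ℂ (σ · t))⁻¹ i j * inner ℂ (σ j t) (ω t)
  have hc (i : ι) : ContinuousOn (c i) {t | LinearIndependent ℂ (σ · t)} :=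
    continuousOn_finsetSum _ fun j _ =>
      ((continuous_id.matrix_elem i j).comp_continuousOn (hΩ.continuousOn_gram_inv hσ)).mul
        (hΩ.continuous_inner (hσ j) hω).continuousOn
  choose ξ hξ hξeq using fun i => hΩ.exists_mem_c0Fields_eventuallyEq_smul hU hli (hc i) (hσ i)
  have hζ : (∑ i, ξ i) - ω ∈ Ω :=
    hΩ.submodule.sub_mem (hΩ.submodule.sum_mem fun i _ => (hξ i).1) hω
  refine (hΩ.norm_continuous _ hζ).continuousAt.congr ?_
  filter_upwards [hU.mem_nhds hli, eventually_all.2 hξeq] with t ht hξt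
  rw [starProjection_span_range_eq_sum_gram_inv ht]
  simp [hξt, c, Finset.sum_smul, smul_smul]

theorem exists_frame_tendsto_norm_starProjection_sub [R1Space T] [LocallyCompactSpace T]
    (hΩ : IsCtsHilbertBundle Ω) {κ : Type*} [Finite κ] {W : κ → ∀ t, H t}
    (hW : ∀ j, W j ∈ Ω) (t₀ : T) :
    ∃ (m : ℕ) (σ : Fin m → ∀ t, H t), (∀ i, σ i ∈ Ω) ∧ LinearIndependent ℂ (σ · t₀) ∧
      ∀ j, Tendsto (fun t => ‖(span ℂ (range (σ · t))).starProjection (W j t) - W j t‖)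
        (𝓝 t₀) (𝓝 0) := by
  obtain ⟨m, s, hli, hspan⟩ := exists_fin_linearIndependent_comp_span_eq (K := ℂ) (W · t₀)
  refine ⟨m, fun i => W (s i), fun i => hW (s i), hli, fun j => ?_⟩
  have hfix : (span ℂ (range fun i => W (s i) t₀)).starProjection (W j t₀) = W j t₀ :=
    starProjection_eq_self_iff.2 (hspan ▸ subset_span (mem_range_self j))
  simpa [ContinuousAt, hfix] using hΩ.continuousAt_norm_starProjection_sub (fun i => hW (s i)) hli (hW j)

theorem exists_continuousOn_starProjection_mul_mul_eq (hΩ : IsCtsHilbertBundle Ω)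
    {a : ∀ t, H t →L[ℂ] H t} (hσ : ∀ i, σ i ∈ Ω) (ha : WeaklyCts Ω a) :
    ∃ D : T → Matrix ι ι ℂ, ContinuousOn D {t | LinearIndependent ℂ (σ · t)} ∧
      ∀ t, LinearIndependent ℂ (σ · t) →
        (span ℂ (range (σ · t))).starProjection * a t * (span ℂ (range (σ · t))).starProjection =
          ∑ i, ∑ l, D t i l • rankOne ℂ (σ i t) (σ l t) := by
  have hM : Continuous fun t => of fun j k => inner ℂ (σ j t) (a t (σ k t)) :=
    continuous_matrix fun j k =>
      (continuous_star.comp (ha _ (hσ k) _ (hσ j))).congr fun t => inner_conj_symm _ _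
  refine ⟨fun t => (gram ℂ (σ · t))⁻¹ * of (fun j k => inner ℂ (σ j t) (a t (σ k t))) *
    (gram ℂ (σ · t))⁻¹, ((hΩ.continuousOn_gram_inv hσ).mul hM.continuousOn).mul
      (hΩ.continuousOn_gram_inv hσ), fun t ht => ?_⟩
  rw [starProjection_span_range_eq_sum_gram_inv ht]
  exact sum_smul_rankOne_mul_mul_sum_smul_rankOne _ _ _ _

end IsCtsHilbertBundle

theorem weaklyCts_of_mem_finRankFields (hΩ : IsCtsHilbertBundle Ω) {S : Set (∀ t, H t)}
    (hS : S ⊆ Ω) {κ : ∀ t, H t →L[ℂ] H t} (hκ : κ ∈ finRankFields S) : WeaklyCts Ω κ := by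
  obtain ⟨n, ω, ν, hω, hν, rfl⟩ := hκ
  intro ω₁ hω₁ ω₂ hω₂
  simp only [rankOneField, ← rankOne_def, _root_.sum_apply, sum_inner, inner_left_rankOne_apply]
  exact continuous_finsetSum _ fun i _ =>
    (hΩ.continuous_inner hω₁ (hS (hν i))).mul (hΩ.continuous_inner (hS (hω i)) hω₂)

theorem WeaklyCts.of_locUnifApprox (hΩ : IsCtsHilbertBundle Ω) {S : Set (∀ t, H t →L[ℂ] H t)}
    (hS : ∀ κ ∈ S, WeaklyCts Ω κ) {a : ∀ t, H t →L[ℂ] H t} (ha : LocUnifApprox S a) :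
    WeaklyCts Ω a := by
  intro ω₁ hω₁ ω₂ hω₂
  refine continuous_of_locally_uniform_approx_of_continuousAt fun t₀ u hu => ?_
  obtain ⟨δ, hδ, hδu⟩ := Metric.mem_uniformity_dist.1 hu
  set M := ‖ω₁ t₀‖ * ‖ω₂ t₀‖ + 1
  have hM : 0 < M := by positivity
  have hbound : ∀ᶠ t in 𝓝 t₀, ‖ω₁ t‖ * ‖ω₂ t‖ < M :=
    ((hΩ.norm_continuous _ hω₁).mul (hΩ.norm_continuous _ hω₂)).continuousAt.eventually_lt
      continuousAt_const (lt_add_one _)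
  obtain ⟨U, hU, ht₀U, κ, hκ, hκa⟩ := ha t₀ (δ / M) (div_pos hδ hM)
  refine ⟨U ∩ {t | ‖ω₁ t‖ * ‖ω₂ t‖ < M}, inter_mem (hU.mem_nhds ht₀U) hbound, _,
    (hS κ hκ ω₁ hω₁ ω₂ hω₂).continuousAt, fun t ⟨htU, htM⟩ => hδu ?_⟩
  rw [dist_eq_norm, ← inner_sub_left, ← _root_.sub_apply]
  calc ‖inner ℂ ((a t - κ t) (ω₁ t)) (ω₂ t)‖ ≤ ‖a t - κ t‖ * ‖ω₁ t‖ * ‖ω₂ t‖ :=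
        (norm_inner_le_norm _ _).trans (by gcongr; exact (a t - κ t).le_opNorm _)
    _ ≤ δ / M * (‖ω₁ t‖ * ‖ω₂ t‖) := by
        rw [mul_assoc]; gcongr; exact (norm_sub_rev (a t) (κ t) ▸ hκa t htU).le
    _ < δ / M * M := by gcongr; exact htM
    _ = δ := div_mul_cancel₀ δ hM.ne'

variable [∀ t, CompleteSpace (H t)] [R1Space T] [LocallyCompactSpace T]

theorem locUnifApprox_finRankFields_c0Fields (hΩ : IsCtsHilbertBundle Ω)
    {a : ∀ t, H t →L[ℂ] H t} (hw : WeaklyCts Ω a) (hafd : AlmostFinDim Ω a) :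
    LocUnifApprox (finRankFields (c0Fields Ω)) a := by
  intro t₀ ε hε
  obtain ⟨U, hU, ht₀U, n, σ, hσ, hσU⟩ := hafd t₀ ε hε
  obtain ⟨D, hD, hPaP⟩ := hΩ.exists_continuousOn_starProjection_mul_mul_eq hσ hw
  have hV := hΩ.isOpen_setOf_linearIndependent hσ
  have ht₀V : t₀ ∈ {t | LinearIndependent ℂ (σ · t)} := (hσU t₀ ht₀U).1
  choose ξ hξ hξeq using fun q : Fin n × Fin n => hΩ.exists_mem_c0Fields_eventuallyEq_smul hV
    ht₀V ((continuous_id.matrix_elem q.1 q.2).comp_continuousOn hD) (hσ q.1)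
  choose η hη hηeq using fun l : Fin n => hΩ.exists_mem_c0Fields_eventuallyEq_smul hV
    ht₀V (continuousOn_const (c := 1)) (hσ l)
  have hclose : ∀ᶠ t in 𝓝 t₀, ‖∑ q, rankOneField (ξ q) (η q.2) t - a t‖ < ε := by
    filter_upwards [hU.mem_nhds ht₀U, eventually_all.2 hξeq, eventually_all.2 hηeq]
      with t htU hξt hηt
    obtain ⟨hli, p, hp_idem, hp_sa, hp_range, hp⟩ := hσU t htU
    rw [eq_starProjection_of_isIdempotentElem_of_isSelfAdjoint hp_idem hp_sa hp_range,
      hPaP t hli] at hp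
    convert hp using 3
    simp [rankOneField, ← rankOne_def, hξt, hηt, Fintype.sum_prod_type]
  obtain ⟨W, hW, hWo, ht₀W⟩ := eventually_nhds_iff.1 hclose
  exact ⟨W, hWo, ht₀W, _, sum_rankOneField_mem_finRankFields (fun q => hξ q) (fun l => hη l.2), hW⟩

theorem AlmostFinDim.of_locUnifApprox (hΩ : IsCtsHilbertBundle Ω) {S : Set (∀ t, H t)}
    (hS : S ⊆ Ω) {a : ∀ t, H t →L[ℂ] H t} (ha : LocUnifApprox (finRankFields S) a) :
    AlmostFinDim Ω a := by
  intro t₀ ε hε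
  obtain ⟨U, hU, ht₀U, κ, ⟨n, ω, ν, hω, hν, hκ⟩, hκa⟩ := ha t₀ (ε / 3) (by positivity)
  have hW : ∀ j, Sum.elim ω ν j ∈ Ω := by
    rintro (j | j)
    exacts [hS (hω j), hS (hν j)]
  obtain ⟨m, σ, hσ, hli, hdist⟩ := hΩ.exists_frame_tendsto_norm_starProjection_sub hW t₀
  set P := fun t => (span ℂ (range (σ · t))).starProjection
  set g : T → ℝ := fun t =>
    ∑ i, (‖P t (ω i t) - ω i t‖ * ‖ν i t‖ + ‖ω i t‖ * ‖P t (ν i t) - ν i t‖)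
  have hg : Tendsto g (𝓝 t₀) (𝓝 0) := by
    have hnorm (j : Fin n ⊕ Fin n) :
        Tendsto (fun t => ‖Sum.elim ω ν j t‖) (𝓝 t₀) (𝓝 ‖Sum.elim ω ν j t₀‖) :=
      (hΩ.norm_continuous _ (hW j)).tendsto t₀
    simpa using tendsto_finsetSum Finset.univ fun i _ =>
      ((hdist (.inl i)).mul (hnorm (.inr i))).add ((hnorm (.inl i)).mul (hdist (.inr i)))
  have hev : ∀ᶠ t in 𝓝 t₀, t ∈ U ∧ LinearIndependent ℂ (σ · t) ∧ g t < ε / 3 :=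
    (hU.eventually_mem ht₀U).and <|
      ((hΩ.isOpen_setOf_linearIndependent hσ).eventually_mem hli).and <|
        hg.eventually_lt_const (by positivity)
  obtain ⟨V, hV, hVo, ht₀V⟩ := eventually_nhds_iff.1 hev
  refine ⟨V, hVo, ht₀V, m, σ, hσ, fun t ht => ?_⟩
  obtain ⟨htU, hli, hgt⟩ := hV t ht
  refine ⟨hli, P t, isIdempotentElem_starProjection _, isSelfAdjoint_starProjection _,
    range_starProjection _, ?_⟩
  have hκP : ‖P t * κ t * P t - κ t‖ ≤ g t := by
    rw [hκ]
    exact norm_starProjection_mul_sum_rankOne_mul_sub_le _ (ω · t) (ν · t)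
  calc ‖P t * a t * P t - a t‖
      ≤ ‖P t * κ t * P t - κ t‖ + 2 * ‖a t - κ t‖ :=
        norm_mul_mul_sub_le_of_norm_le_one (starProjection_norm_le _) _ _
    _ < ε / 3 + 2 * (ε / 3) := by
        gcongr
        · exact hκP.trans_lt hgt
        · rw [norm_sub_rev]; exact hκa t htU
    _ = ε := by ring

end HilbertBundle

/-- Lemma `C=A`.  Let `A = A(T, {H_t}, Ω)` be the Fell
C*-algebra of a continuous Hilbert bundle over a locally compact Hausdorff
space `T`.  Then `A = C₀(T, {K(H_t)}, F(Ω₀))`: an operator field `a` whose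
pointwise norm function lies in `C₀(T)` belongs to `A` iff `a t` is a compact
operator for every `t` and `a` is a local uniform limit of finite-rank fields
from `F(Ω₀)`, where `Ω₀ = {ω ∈ Ω : ‖ω(·)‖ ∈ C₀(T)}`. -/
theorem fellAlgebra_eq_C0_sections
    {T : Type} [TopologicalSpace T] [LocallyCompactSpace T] [T2Space T]
    {H : T → Type} [∀ t, NormedAddCommGroup (H t)] [∀ t, InnerProductSpace ℂ (H t)]
    [∀ t, CompleteSpace (H t)]
    (Ω : Set (∀ t, H t)) (hΩ : IsCtsHilbertBundle Ω)
    (a : ∀ t, H t →L[ℂ] H t)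
    (ha_norm : Continuous fun t => ‖a t‖)
    (ha_c0 : Filter.Tendsto (fun t => ‖a t‖) (Filter.cocompact T) (nhds 0)) :
    a ∈ FellAlgebra Ω ↔
      ((∀ t, IsCompactOperator (a t : H t → H t)) ∧
        LocUnifApprox
          (finRankFields {ω ∈ Ω |
            Filter.Tendsto (fun t => ‖ω t‖) (Filter.cocompact T) (nhds 0)}) a) := by
  constructor
  · rintro ⟨hw, hafd, -, -⟩
    have happrox := locUnifApprox_finRankFields_c0Fields hΩ hw hafd
    exact ⟨isCompactOperator_of_locUnifApprox_finRankFields happrox, happrox⟩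
  · rintro ⟨-, happrox⟩
    have hsub : c0Fields Ω ⊆ Ω := sep_subset _ _
    exact ⟨WeaklyCts.of_locUnifApprox hΩ (fun κ hκ => weaklyCts_of_mem_finRankFields hΩ hsub hκ)
      happrox, AlmostFinDim.of_locUnifApprox hΩ hsub happrox, ha_norm, ha_c0⟩
end

section
/- Let A be the Fell C*-algebra of a continuous Hilbert bundle over a locally compact Hausdorff space T and let I be an essential ideal of A. Let ν ∈ E^I be such that t ↦ ‖ν(t)‖ belongs to C₀(X^I), and let x be a bounded operator field on X^I that is strictly continuous with respect to F((Ω^I|_{X^I})₀) (i.e. x represents an element of M(I)). Then there exists ω ∈ Ω^I such that ω(t) = x(t)ν(t) for every t ∈ X^I and ω(t) = 0 for every t ∈ βX^I ∖ X^I. -/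
/- Near a point where `‖ν‖ > 0`, strict continuity tested against the rank-one field `Θ_{ν,ν}`
yields a finite-rank field `b = ∑ Θ_{μᵢ,μ'ᵢ}` with `‖(x - b)ν‖` small; and `bν = ∑ ⟨ν, μ'ᵢ⟩ μᵢ` is
a `C(βX^I)`-combination of fields of `Ω^I`, hence lies in `Ω^I`. Where `ν` vanishes, `xν` is
dominated by `C‖ν‖` and is approximated by `0`. Off `X^I` the field `ν` vanishes because its norm
is in `C₀(X^I)` and `X^I` is dense, so extending `xν` by zero gives the required field. -/

open Filter Topology Set
open scoped InnerProductSpace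

section LocUnifApprox

variable {B : Type*} [TopologicalSpace B] {K : B → Type*} [∀ u, NormedAddCommGroup (K u)]

theorem locUnifApprox_iff {S : Set (∀ u, K u)} {ξ : ∀ u, K u} :
    LocUnifApprox S ξ ↔ ∀ u₀ : B, ∀ ε : ℝ, 0 < ε → ∃ a ∈ S, ∀ᶠ u in 𝓝 u₀, ‖a u - ξ u‖ < ε := by
  refine forall_congr' fun u₀ => forall₂_congr fun ε _ => ⟨?_, ?_⟩
  · rintro ⟨U, hU, hu₀, a, ha, haξ⟩
    exact ⟨a, ha, eventually_of_mem (hU.mem_nhds hu₀) haξ⟩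
  · rintro ⟨a, ha, haξ⟩
    obtain ⟨U, hUξ, hU, hu₀⟩ := mem_nhds_iff.1 haξ
    exact ⟨U, hU, hu₀, a, ha, hUξ⟩

theorem locUnifApprox_of_mem_s19 {S : Set (∀ u, K u)} {ξ : ∀ u, K u} (hξ : ξ ∈ S) :
    LocUnifApprox S ξ :=
  locUnifApprox_iff.2 fun _ _ hε => ⟨ξ, hξ, .of_forall fun _ => by simpa using hε⟩

theorem LocUnifApprox.of_setOf {S : Set (∀ u, K u)} {ξ : ∀ u, K u}
    (h : LocUnifApprox {μ | LocUnifApprox S μ} ξ) : LocUnifApprox S ξ := by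
  refine locUnifApprox_iff.2 fun u₀ ε hε => ?_
  obtain ⟨μ, hμ, hμξ⟩ := locUnifApprox_iff.1 h u₀ (ε / 2) (half_pos hε)
  obtain ⟨a, ha, haμ⟩ := locUnifApprox_iff.1 hμ u₀ (ε / 2) (half_pos hε)
  refine ⟨a, ha, ?_⟩
  filter_upwards [hμξ, haμ] with u h₁ h₂
  calc ‖a u - ξ u‖ ≤ ‖a u - μ u‖ + ‖μ u - ξ u‖ := norm_sub_le_norm_sub_add_norm_sub _ _ _
    _ < ε := by linarith

theorem locUnifApprox_of_norm_le {S : Set (∀ u, K u)} (h0 : 0 ∈ S) {g : B → ℝ}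
    (hg : Continuous g) {ξ : ∀ u, K u} (hξ : ∀ u, ‖ξ u‖ ≤ g u)
    (happrox : ∀ u₀, g u₀ ≠ 0 → ∀ ε : ℝ, 0 < ε →
      ∃ U : Set B, IsOpen U ∧ u₀ ∈ U ∧ ∃ μ ∈ S, ∀ u ∈ U, ‖μ u - ξ u‖ < ε) :
    LocUnifApprox S ξ := by
  intro u₀ ε hε
  by_cases hg₀ : g u₀ = 0
  · refine ⟨{u | g u < ε}, isOpen_lt hg continuous_const, by simpa [hg₀] using hε, 0, h0,
      fun u hu => ?_⟩
    simpa using (hξ u).trans_lt hu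
  · exact happrox u₀ hg₀ ε hε

section Module

variable {𝕜 : Type*} [NormedField 𝕜] [∀ u, NormedSpace 𝕜 (K u)]

theorem LocUnifApprox.add {S : Submodule 𝕜 (∀ u, K u)} {μ ν : ∀ u, K u}
    (hμ : LocUnifApprox (S : Set (∀ u, K u)) μ) (hν : LocUnifApprox (S : Set (∀ u, K u)) ν) :
    LocUnifApprox (S : Set (∀ u, K u)) (μ + ν) := by
  refine locUnifApprox_iff.2 fun u₀ ε hε => ?_
  obtain ⟨a, ha, haμ⟩ := locUnifApprox_iff.1 hμ u₀ (ε / 2) (half_pos hε)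
  obtain ⟨b, hb, hbν⟩ := locUnifApprox_iff.1 hν u₀ (ε / 2) (half_pos hε)
  refine ⟨a + b, S.add_mem ha hb, ?_⟩
  filter_upwards [haμ, hbν] with u h₁ h₂
  calc ‖(a + b) u - (μ + ν) u‖ = ‖(a u - μ u) + (b u - ν u)‖ := by
        rw [Pi.add_apply, Pi.add_apply, add_sub_add_comm]
    _ ≤ ‖a u - μ u‖ + ‖b u - ν u‖ := norm_add_le _ _
    _ < ε := by linarith

theorem LocUnifApprox.const_smul {S : Submodule 𝕜 (∀ u, K u)} (c : 𝕜) {μ : ∀ u, K u}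
    (hμ : LocUnifApprox (S : Set (∀ u, K u)) μ) : LocUnifApprox (S : Set (∀ u, K u)) (c • μ) := by
  refine locUnifApprox_iff.2 fun u₀ ε hε => ?_
  have hδ : 0 < ε / (‖c‖ + 1) := by positivity
  obtain ⟨a, ha, haμ⟩ := locUnifApprox_iff.1 hμ u₀ _ hδ
  refine ⟨c • a, S.smul_mem c ha, ?_⟩
  filter_upwards [haμ] with u hu
  calc ‖(c • a) u - (c • μ) u‖ = ‖c‖ * ‖a u - μ u‖ := by
        rw [Pi.smul_apply, Pi.smul_apply, ← smul_sub, norm_smul]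
    _ ≤ ‖c‖ * (ε / (‖c‖ + 1)) := by gcongr
    _ < (‖c‖ + 1) * (ε / (‖c‖ + 1)) := mul_lt_mul_of_pos_right (lt_add_one _) hδ
    _ = ε := mul_div_cancel₀ _ (by positivity)

/- For `S = E^I` this is the paper's `Ω^I`. -/
def Submodule.locUnifClosure (S : Submodule 𝕜 (∀ u, K u)) : Submodule 𝕜 (∀ u, K u) where
  carrier := {ξ | LocUnifApprox (S : Set (∀ u, K u)) ξ}
  add_mem' := LocUnifApprox.add
  zero_mem' := locUnifApprox_of_mem_s19 S.zero_mem
  smul_mem' c _ := LocUnifApprox.const_smul c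

theorem LocUnifApprox.continuous_smul {S : Submodule 𝕜 (∀ u, K u)}
    (hS : ∀ a ∈ S, Continuous fun u => ‖a u‖) {f : B → 𝕜} (hf : Continuous f) {μ : ∀ u, K u}
    (hμ : LocUnifApprox (S : Set (∀ u, K u)) μ) :
    LocUnifApprox (S : Set (∀ u, K u)) (fun u => f u • μ u) := by
  refine locUnifApprox_iff.2 fun u₀ ε hε => ?_
  set M := ‖f u₀‖ + 1
  obtain ⟨a, ha, haμ⟩ := locUnifApprox_iff.1 hμ u₀ (ε / (3 * M)) (by positivity)
  set N := ‖a u₀‖ + 1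
  have hM : 0 < M := by positivity
  have hN : 0 < N := by positivity
  have hfM : ∀ᶠ u in 𝓝 u₀, ‖f u‖ < M :=
    (hf.norm.tendsto u₀).eventually (gt_mem_nhds (lt_add_one _))
  have haN : ∀ᶠ u in 𝓝 u₀, ‖a u‖ < N :=
    ((hS a ha).tendsto u₀).eventually (gt_mem_nhds (lt_add_one _))
  have hff : ∀ᶠ u in 𝓝 u₀, ‖f u₀ - f u‖ < ε / (3 * N) := by
    have := (hf.tendsto u₀).eventually
      (Metric.ball_mem_nhds (f u₀) (div_pos hε (mul_pos three_pos hN)))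
    simpa only [Metric.mem_ball, dist_eq_norm'] using this
  refine ⟨f u₀ • a, S.smul_mem _ ha, ?_⟩
  filter_upwards [haμ, hfM, haN, hff] with u h₁ h₂ h₃ h₄
  calc ‖(f u₀ • a) u - f u • μ u‖ = ‖(f u₀ - f u) • a u + f u • (a u - μ u)‖ := by
        rw [Pi.smul_apply, sub_smul, smul_sub]; abel_nf
    _ ≤ ‖f u₀ - f u‖ * ‖a u‖ + ‖f u‖ * ‖a u - μ u‖ := by
        rw [← norm_smul, ← norm_smul]; exact norm_add_le _ _
    _ ≤ ε / (3 * N) * N + M * (ε / (3 * M)) := by gcongr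
    _ = 2 * ε / 3 := by field_simp; ring
    _ < ε := by linarith

end Module

section Inner

variable {𝕜 : Type*} [RCLike 𝕜] [∀ u, InnerProductSpace 𝕜 (K u)]

theorem continuous_norm_of_continuous_inner_self {a : ∀ u, K u}
    (h : Continuous fun u => ⟪a u, a u⟫_𝕜) : Continuous fun u => ‖a u‖ := by
  simp only [norm_eq_sqrt_re_inner (𝕜 := 𝕜)]
  exact (RCLike.continuous_re.comp h).sqrt

theorem LocUnifApprox.continuous_inner {S : Set (∀ u, K u)} {μ ν : ∀ u, K u}
    (hμ : LocUnifApprox S μ) (hν : Continuous fun u => ‖ν u‖)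
    (hS : ∀ a ∈ S, Continuous fun u => ⟪a u, ν u⟫_𝕜) : Continuous fun u => ⟪μ u, ν u⟫_𝕜 := by
  refine continuous_of_locally_uniform_approx_of_continuousAt fun u₀ V hV => ?_
  obtain ⟨ε, hε, hεV⟩ := Metric.mem_uniformity_dist.1 hV
  set M := ‖ν u₀‖ + 1
  obtain ⟨a, ha, haμ⟩ := locUnifApprox_iff.1 hμ u₀ (ε / M) (by positivity)
  refine ⟨_, haμ.and ((hν.tendsto u₀).eventually (gt_mem_nhds (lt_add_one _))), _,
    (hS a ha).continuousAt, fun u ⟨h₁, h₂⟩ => hεV ?_⟩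
  calc dist ⟪μ u, ν u⟫_𝕜 ⟪a u, ν u⟫_𝕜 = ‖⟪a u - μ u, ν u⟫_𝕜‖ := by
        rw [dist_eq_norm', inner_sub_left]
    _ ≤ ‖a u - μ u‖ * ‖ν u‖ := norm_inner_le_norm _ _
    _ < ε / M * M := mul_lt_mul'' h₁ h₂ (norm_nonneg _) (norm_nonneg _)
    _ = ε := div_mul_cancel₀ _ (by positivity)

end Inner

end LocUnifApprox

section ExtendByZero

variable {A B : Type*} {K : B → Type*}

open Classical in
noncomputable def extendByZero [∀ u, Zero (K u)] (ι : A → B) (v : ∀ a, K (ι a)) : ∀ u, K u :=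
  fun u => if h : ∃ a, ι a = u then h.choose_spec ▸ v h.choose else 0

theorem extendByZero_apply [∀ u, Zero (K u)] {ι : A → B} (hι : Function.Injective ι)
    (v : ∀ a, K (ι a)) (a : A) : extendByZero ι v (ι a) = v a := by
  have h : ∃ a', ι a' = ι a := ⟨a, rfl⟩
  rw [extendByZero, dif_pos h]
  have key : ∀ a' (p : ι a' = ι a), (p ▸ v a' : K (ι a)) = v a := by
    intro a' p
    obtain rfl := hι p
    rfl
  exact key _ h.choose_spec

theorem extendByZero_of_notMem [∀ u, Zero (K u)] (ι : A → B) (v : ∀ a, K (ι a)) {u : B}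
    (hu : u ∉ range ι) : extendByZero ι v u = 0 :=
  dif_neg hu

theorem norm_extendByZero_le [∀ u, NormedAddCommGroup (K u)] {ι : A → B}
    (hι : Function.Injective ι) {v : ∀ a, K (ι a)} {g : B → ℝ} (hv : ∀ a, ‖v a‖ ≤ g (ι a))
    (hg : ∀ u, 0 ≤ g u) (u : B) : ‖extendByZero ι v u‖ ≤ g u := by
  by_cases hu : u ∈ range ι
  · obtain ⟨a, rfl⟩ := hu
    rw [extendByZero_apply hι]
    exact hv a
  · rw [extendByZero_of_notMem ι v hu, norm_zero]
    exact hg u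

end ExtendByZero

theorem comap_nhds_le_cocompact_of_notMem_range {X B : Type*} [TopologicalSpace X]
    [TopologicalSpace B] [T2Space B] {ι : X → B} (hι : Continuous ι) {u : B}
    (hu : u ∉ range ι) : comap ι (𝓝 u) ≤ cocompact X := by
  intro s hs
  obtain ⟨K, hK, hKs⟩ := mem_cocompact.1 hs
  refine ⟨(ι '' K)ᶜ, (hK.image hι).isClosed.isOpen_compl.mem_nhds ?_, fun t ht => hKs ?_⟩
  · rintro ⟨t, -, rfl⟩
    exact hu ⟨t, rfl⟩
  · exact fun htK => ht ⟨t, htK, rfl⟩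

theorem DenseRange.apply_eq_of_tendsto_cocompact {X B Y : Type*} [TopologicalSpace X]
    [TopologicalSpace B] [T2Space B] [TopologicalSpace Y] [T2Space Y] {ι : X → B}
    (hd : DenseRange ι) (hι : Continuous ι) {f : B → Y} (hf : Continuous f) {y : Y}
    (h : Tendsto (fun t => f (ι t)) (cocompact X) (𝓝 y)) {u : B} (hu : u ∉ range ι) :
    f u = y := by
  have : (comap ι (𝓝 u)).NeBot := comap_neBot fun s hs => by
    obtain ⟨_, hs', t, rfl⟩ := mem_closure_iff_nhds.1 (hd u) s hs
    exact ⟨t, hs'⟩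
  exact tendsto_nhds_unique ((hf.tendsto u).comp tendsto_comap)
    (h.mono_left (comap_nhds_le_cocompact_of_notMem_range hι hu))

def Submodule.imageOfLinearOn {R M N : Type*} [Semiring R] [AddCommMonoid M] [Module R M]
    [AddCommMonoid N] [Module R N] (p : Submodule R M) (f : M → N)
    (hadd : ∀ x ∈ p, ∀ y ∈ p, f (x + y) = f x + f y)
    (hsmul : ∀ (c : R), ∀ x ∈ p, f (c • x) = c • f x) : Submodule R N where
  carrier := f '' p
  add_mem' := by
    rintro _ _ ⟨x, hx, rfl⟩ ⟨y, hy, rfl⟩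
    exact ⟨x + y, p.add_mem hx hy, hadd x hx y hy⟩
  zero_mem' := ⟨0, p.zero_mem, by simpa using hsmul 0 0 p.zero_mem⟩
  smul_mem' := by
    rintro c _ ⟨x, hx, rfl⟩
    exact ⟨c • x, p.smul_mem c hx, hsmul c x hx⟩

def IsCtsHilbertBundle.boundedFieldsSubmodule {T : Type*} [TopologicalSpace T] {H : T → Type*}
    [∀ t, NormedAddCommGroup (H t)] [∀ t, InnerProductSpace ℂ (H t)] {Ω : Set (∀ t, H t)}
    (hΩ : IsCtsHilbertBundle Ω) : Submodule ℂ (∀ t, H t) where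
  carrier := boundedFields Ω
  add_mem' := by
    rintro ω ν ⟨hω, M, hM⟩ ⟨hν, N, hN⟩
    exact ⟨hΩ.add_mem ω hω ν hν, M + N,
      fun t => (norm_add_le _ _).trans (add_le_add (hM t) (hN t))⟩
  zero_mem' := ⟨hΩ.zero_mem, 0, fun _ => by simp⟩
  smul_mem' := by
    rintro c ω ⟨hω, M, hM⟩
    refine ⟨hΩ.smul_mem (ContinuousMap.const T c) ω hω, ‖c‖ * M, fun t => ?_⟩
    rw [Pi.smul_apply, norm_smul]
    exact mul_le_mul_of_nonneg_left (hM t) (norm_nonneg c)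

theorem norm_apply_mul_norm_le_norm_mul_rankOne_self {𝕜 E : Type*} [RCLike 𝕜]
    [NormedAddCommGroup E] [InnerProductSpace 𝕜 E] (y : E →L[𝕜] E) (v : E) :
    ‖y v‖ * ‖v‖ ≤ ‖y * InnerProductSpace.rankOne 𝕜 v v‖ := by
  rcases eq_or_ne v 0 with rfl | hv
  · simp
  have h := (y * InnerProductSpace.rankOne 𝕜 v v).le_opNorm v
  rw [mul_apply_eq_comp, InnerProductSpace.rankOne_apply, map_smul, norm_smul,
    inner_self_eq_norm_sq_to_K, norm_pow, RCLike.norm_ofReal, abs_norm] at h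
  refine le_of_mul_le_mul_right ?_ (norm_pos_iff.2 hv)
  calc ‖y v‖ * ‖v‖ * ‖v‖ = ‖v‖ ^ 2 * ‖y v‖ := by ring
    _ ≤ _ := h

section FiniteRank

variable {X : Type*} {G : X → Type*} [∀ t, NormedAddCommGroup (G t)]
  [∀ t, InnerProductSpace ℂ (G t)]

@[simp]
theorem rankOneField_apply (ω ν : ∀ t, G t) (t : X) (v : G t) :
    rankOneField ω ν t v = ⟪ν t, v⟫_ℂ • ω t :=
  rfl

theorem rankOneField_mem_finRankFields {S : Set (∀ t, G t)} {ω ν : ∀ t, G t} (hω : ω ∈ S)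
    (hν : ν ∈ S) : rankOneField ω ν ∈ finRankFields S :=
  ⟨1, fun _ => ω, fun _ => ν, fun _ => hω, fun _ => hν, by simp⟩

theorem StrictlyCts.exists_finRankFields_near_apply [TopologicalSpace X] {S : Set (∀ t, G t)}
    {x : ∀ t, G t →L[ℂ] G t} (hx : StrictlyCts (finRankFields S) x) {v : ∀ t, G t} (hv : v ∈ S)
    (t₀ : X) {ε c : ℝ} (hε : 0 < ε) (hc : 0 < c) :
    ∃ U : Set X, IsOpen U ∧ t₀ ∈ U ∧ ∃ b ∈ finRankFields S,
      ∀ t ∈ U, c < ‖v t‖ → ‖x t (v t) - b t (v t)‖ < ε := by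
  obtain ⟨U, hU, ht₀, b, hb, hxb⟩ :=
    hx t₀ _ (rankOneField_mem_finRankFields hv hv) (ε * c) (mul_pos hε hc)
  refine ⟨U, hU, ht₀, b, hb, fun t ht hct => lt_of_mul_lt_mul_right ?_ (norm_nonneg (v t))⟩
  calc ‖x t (v t) - b t (v t)‖ * ‖v t‖ ≤ ‖(x t - b t) * rankOneField v v t‖ :=
        norm_apply_mul_norm_le_norm_mul_rankOne_self (x t - b t) (v t)
    _ < ε * c := (le_add_of_nonneg_right (norm_nonneg _)).trans_lt (hxb t ht)
    _ < ε * ‖v t‖ := mul_lt_mul_of_pos_left hct hε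

end FiniteRank

theorem exists_locUnifClosure_near_of_strictlyCts {B X : Type*} [TopologicalSpace B]
    [TopologicalSpace X] {K : B → Type*} [∀ u, NormedAddCommGroup (K u)]
    [∀ u, InnerProductSpace ℂ (K u)] {ι : X → B} (hι : IsInducing ι)
    {E : Submodule ℂ (∀ u, K u)} (hE : ∀ a ∈ E, ∀ b ∈ E, Continuous fun u => ⟪a u, b u⟫_ℂ)
    {S : Set (∀ t, K (ι t))} (hS : ∀ ω ∈ S, ∃ μ ∈ E.locUnifClosure, ∀ t, ω t = μ (ι t))
    {x : ∀ t, K (ι t) →L[ℂ] K (ι t)} (hx : StrictlyCts (finRankFields S) x)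
    {ν : ∀ u, K u} (hν : ν ∈ E) (hνS : (fun t => ν (ι t)) ∈ S)
    (hsupp : ∀ u, ν u ≠ 0 → u ∈ range ι) {ξ : ∀ u, K u} (hξ : ∀ t, ξ (ι t) = x t (ν (ι t)))
    {u₀ : B} (hu₀ : ν u₀ ≠ 0) {ε : ℝ} (hε : 0 < ε) :
    ∃ V : Set B, IsOpen V ∧ u₀ ∈ V ∧ ∃ μ ∈ E.locUnifClosure, ∀ u ∈ V, ‖μ u - ξ u‖ < ε := by
  obtain ⟨t₀, rfl⟩ := hsupp u₀ hu₀
  have hEnorm : ∀ a ∈ E, Continuous fun u => ‖a u‖ := fun a ha =>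
    continuous_norm_of_continuous_inner_self (hE a ha a ha)
  have hc : 0 < ‖ν (ι t₀)‖ / 2 := half_pos (norm_pos_iff.2 hu₀)
  obtain ⟨U, hU, ht₀U, b, ⟨n, ω, ω', hω, hω', rfl⟩, hxb⟩ :=
    hx.exists_finRankFields_near_apply hνS t₀ hε hc
  choose μ hμ hμω using fun i => hS _ (hω i)
  choose μ' hμ' hμω' using fun i => hS _ (hω' i)
  obtain ⟨V, hV, rfl⟩ := hι.isOpen_iff.1 hU
  have hbν : (fun u => ∑ i, ⟪μ' i u, ν u⟫_ℂ • μ i u) ∈ E.locUnifClosure := by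
    convert E.locUnifClosure.sum_mem (t := Finset.univ) fun i _ =>
      (hμ i).continuous_smul hEnorm
        ((hμ' i).continuous_inner (hEnorm ν hν) fun a ha => hE a ha ν hν) using 1
    ext u
    simp only [Finset.sum_apply]
  refine ⟨V ∩ {u | ‖ν (ι t₀)‖ / 2 < ‖ν u‖}, hV.inter (isOpen_lt continuous_const (hEnorm ν hν)),
    ⟨ht₀U, half_lt_self (norm_pos_iff.2 hu₀)⟩, _, hbν, ?_⟩
  rintro u ⟨huV, hu⟩
  obtain ⟨t, rfl⟩ := hsupp u (norm_pos_iff.1 (hc.trans hu))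
  rw [hξ, norm_sub_rev]
  simpa [hμω, hμω'] using hxb t huV hu

theorem multiplier_applied_to_C0_field_general
    {T : Type} [TopologicalSpace T]
    {H : T → Type} [∀ t, NormedAddCommGroup (H t)] [∀ t, InnerProductSpace ℂ (H t)]
    (Ω : Set (∀ t, H t)) (hΩ : IsCtsHilbertBundle Ω)
    (I : Set (∀ t, H t →L[ℂ] H t))
    {βX : Type} [TopologicalSpace βX] [T2Space βX]
    (ι : idealSupp I → βX) (hι : Topology.IsEmbedding ι) (hιdense : DenseRange ι)
    {HI : βX → Type} [∀ u, NormedAddCommGroup (HI u)]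
    [∀ u, InnerProductSpace ℂ (HI u)]
    (bar : (∀ t, H t) → ∀ u, HI u)
    (hbar_add : ∀ ω ∈ boundedFields Ω, ∀ ν ∈ boundedFields Ω,
      bar (ω + ν) = bar ω + bar ν)
    (hbar_smul : ∀ (c : ℂ), ∀ ω ∈ boundedFields Ω, bar (c • ω) = c • bar ω)
    (hbar_inner_cont : ∀ ω ∈ boundedFields Ω, ∀ ν ∈ boundedFields Ω,
      Continuous fun u => (inner ℂ (bar ω u) (bar ν u) : ℂ))
    -- `ν ∈ E^I` with pointwise norm in `C₀(X^I)`: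
    (ω₀ : ∀ t, H t) (hω₀ : ω₀ ∈ boundedFields Ω)
    (hν_c0 : Filter.Tendsto (fun x : idealSupp I => ‖bar ω₀ (ι x)‖)
      (Filter.cocompact (idealSupp I)) (nhds 0))
    -- `x ∈ M(I)`: a bounded operator field on `X^I`, strictly continuous with
    -- respect to `F((Ω^I|_{X^I})₀)`:
    (x : ∀ t : idealSupp I, HI (ι t) →L[ℂ] HI (ι t))
    (hx : x ∈ MultSet (finRankFields
      {ω' : ∀ t : idealSupp I, HI (ι t) |
        ∃ μ ∈ {μ : ∀ u, HI u | LocUnifApprox (bar '' boundedFields Ω) μ},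
          (∀ t : idealSupp I, ω' t = μ (ι t)) ∧
          Filter.Tendsto (fun t : idealSupp I => ‖μ (ι t)‖)
            (Filter.cocompact (idealSupp I)) (nhds 0)})) :
    ∃ ω ∈ {μ : ∀ u, HI u | LocUnifApprox (bar '' boundedFields Ω) μ},
      (∀ t : idealSupp I, ω (ι t) = x t (bar ω₀ (ι t))) ∧
      (∀ u : βX, u ∉ Set.range ι → ω u = 0) := by
  set E := hΩ.boundedFieldsSubmodule.imageOfLinearOn bar hbar_add hbar_smul
  have hE : ∀ a ∈ E, ∀ b ∈ E, Continuous fun u => ⟪a u, b u⟫_ℂ := by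
    rintro _ ⟨a, ha, rfl⟩ _ ⟨b, hb, rfl⟩
    exact hbar_inner_cont a ha b hb
  have hν : bar ω₀ ∈ E := ⟨ω₀, hω₀, rfl⟩
  have hνnorm := continuous_norm_of_continuous_inner_self (hE _ hν _ hν)
  have hsupp : ∀ u, bar ω₀ u ≠ 0 → u ∈ range ι := fun u hu => by_contra fun hu' =>
    hu (norm_eq_zero.1 (hιdense.apply_eq_of_tendsto_cocompact hι.continuous hνnorm hν_c0 hu'))
  obtain ⟨C, hC⟩ := hx.1
  have hξ : ∀ u, ‖extendByZero ι (fun t => x t (bar ω₀ (ι t))) u‖ ≤ |C| * ‖bar ω₀ u‖ :=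
    norm_extendByZero_le hι.injective
      (fun t => (x t).le_of_opNorm_le ((hC t).trans (le_abs_self C)) _) fun u => by positivity
  refine ⟨_, LocUnifApprox.of_setOf (locUnifApprox_of_norm_le E.locUnifClosure.zero_mem
      (continuous_const.mul hνnorm) hξ fun u₀ hu₀ ε hε => ?_),
    extendByZero_apply hι.injective _, fun u => extendByZero_of_notMem ι _⟩
  refine exists_locUnifClosure_near_of_strictlyCts hι.isInducing hE ?_ hx.2 hν
    ⟨bar ω₀, locUnifApprox_of_mem_s19 hν, fun _ => rfl, hν_c0⟩ hsupp
    (extendByZero_apply hι.injective _) (norm_ne_zero_iff.1 (right_ne_zero_of_mul hu₀)) hε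
  rintro _ ⟨μ, hμ, hμω, -⟩
  exact ⟨μ, hμ, hμω⟩

/-- Lemma `*-str cont`.  Let `I` be an essential ideal of the
Fell algebra `A`, let `ν ∈ E^I` have pointwise norm in `C₀(X^I)`, and let `x`
be a bounded operator field on `X^I` strictly continuous w.r.t.
`F((Ω^I|_{X^I})₀)` (i.e. `x` represents an element of `M(I)`).  Then there is
`ω ∈ Ω^I` with `ω(t) = x(t)ν(t)` on `X^I` and `ω = 0` off `X^I`. -/
theorem multiplier_applied_to_C0_field
    {T : Type} [TopologicalSpace T] [LocallyCompactSpace T] [T2Space T]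
    {H : T → Type} [∀ t, NormedAddCommGroup (H t)] [∀ t, InnerProductSpace ℂ (H t)]
    [∀ t, CompleteSpace (H t)]
    (Ω : Set (∀ t, H t)) (hΩ : IsCtsHilbertBundle Ω)
    (I : Set (∀ t, H t →L[ℂ] H t))
    (hI : IsEssentialIdealOf (FellAlgebra Ω) I)
    {βX : Type} [TopologicalSpace βX] [CompactSpace βX] [T2Space βX]
    (ι : idealSupp I → βX) (hι : Topology.IsEmbedding ι) (hιdense : DenseRange ι)
    {HI : βX → Type} [∀ u, NormedAddCommGroup (HI u)]
    [∀ u, InnerProductSpace ℂ (HI u)] [∀ u, CompleteSpace (HI u)]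
    (bar : (∀ t, H t) → ∀ u, HI u)
    (hbar_add : ∀ ω ∈ boundedFields Ω, ∀ ν ∈ boundedFields Ω,
      bar (ω + ν) = bar ω + bar ν)
    (hbar_smul : ∀ (c : ℂ), ∀ ω ∈ boundedFields Ω, bar (c • ω) = c • bar ω)
    (hbar_inner_cont : ∀ ω ∈ boundedFields Ω, ∀ ν ∈ boundedFields Ω,
      Continuous fun u => (inner ℂ (bar ω u) (bar ν u) : ℂ))
    (hbar_dense : ∀ (u : βX) (v : HI u) (ε : ℝ), 0 < ε →
      ∃ ω ∈ boundedFields Ω, ‖bar ω u - v‖ < ε)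
    -- `ν ∈ E^I` with pointwise norm in `C₀(X^I)`:
    (ω₀ : ∀ t, H t) (hω₀ : ω₀ ∈ boundedFields Ω)
    (hν_c0 : Filter.Tendsto (fun x : idealSupp I => ‖bar ω₀ (ι x)‖)
      (Filter.cocompact (idealSupp I)) (nhds 0))
    -- `x ∈ M(I)`: a bounded operator field on `X^I`, strictly continuous with
    -- respect to `F((Ω^I|_{X^I})₀)`:
    (x : ∀ t : idealSupp I, HI (ι t) →L[ℂ] HI (ι t))
    (hx : x ∈ MultSet (finRankFields
      {ω' : ∀ t : idealSupp I, HI (ι t) |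
        ∃ μ ∈ {μ : ∀ u, HI u | LocUnifApprox (bar '' boundedFields Ω) μ},
          (∀ t : idealSupp I, ω' t = μ (ι t)) ∧
          Filter.Tendsto (fun t : idealSupp I => ‖μ (ι t)‖)
            (Filter.cocompact (idealSupp I)) (nhds 0)})) :
    ∃ ω ∈ {μ : ∀ u, HI u | LocUnifApprox (bar '' boundedFields Ω) μ},
      (∀ t : idealSupp I, ω (ι t) = x t (bar ω₀ (ι t))) ∧
      (∀ u : βX, u ∉ Set.range ι → ω u = 0) :=
  multiplier_applied_to_C0_field_general Ω hΩ I ι hι hιdense bar hbar_add hbar_smul hbar_inner_cont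
    ω₀ hω₀ hν_c0 x hx
end
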